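/- arXiv:2406.03142 — 8 statements merged into one kernel-verified Lean document; each statement's English description precedes it below -/
import Mathlib

section
/- There exists a finite probability distribution over feature-group-label triples such that the minimum 0-1 loss over all randomized classifiers satisfying Demographic Parity is strictly less than the minimum 0-1 loss over all deterministic classifiers satisfying Demographic Parity. -/
open Finset

/-- `P` is a probability distribution on `X × Z × Y` with `Z = Bool` (group, `true` = A,
`false` = D) and `Y = Bool` (label, `true` = 1). -/
def IsDist {X : Type*} [Fintype X] (P : X × Bool × Bool → ℝ) : Prop :=
  (∀ p, 0 ≤ P p) ∧ ∑ p : X × Bool × Bool, P p = 1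

/-- mass of the feature-group cell `(x, z)`. -/
noncomputable def cellMass {X : Type*} (P : X × Bool × Bool → ℝ) (x : X) (z : Bool) : ℝ :=
  P (x, z, false) + P (x, z, true)

/-- total mass of group `z`. -/
noncomputable def gMass {X : Type*} [Fintype X] (P : X × Bool × Bool → ℝ) (z : Bool) : ℝ :=
  ∑ x, cellMass P x z

/-- score of the cell `(x, z)`: `Pr[Y = 1 | X = x, Z = z]`. -/
noncomputable def score {X : Type*} (P : X × Bool × Bool → ℝ) (x : X) (z : Bool) : ℝ :=
  P (x, z, true) / cellMass P x z

/-- A randomized classifier takes values in `[0,1]`. -/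
def InUnit {X : Type*} (f : X × Bool → ℝ) : Prop := ∀ p, f p ∈ Set.Icc (0 : ℝ) 1

/-- selection rate of randomized classifier `f` on group `z`: `E[f(X,Z) | Z = z]`. -/
noncomputable def selRate {X : Type*} [Fintype X] (P : X × Bool × Bool → ℝ) (f : X × Bool → ℝ)
    (z : Bool) : ℝ :=
  (∑ x, f (x, z) * cellMass P x z) / gMass P z

/-- 0-1 loss of randomized classifier `f` under `P`. -/
noncomputable def loss {X : Type*} [Fintype X] (P : X × Bool × Bool → ℝ) (f : X × Bool → ℝ) : ℝ :=
  ∑ x, ∑ z, (P (x, z, true) * (1 - f (x, z)) + P (x, z, false) * f (x, z))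

/-- Demographic parity: equal selection rates on the two groups. -/
def DP {X : Type*} [Fintype X] (P : X × Bool × Bool → ℝ) (f : X × Bool → ℝ) : Prop :=
  selRate P f true = selRate P f false

/-- false positive rate of `f` on group `z`: `E[f(X,Z) | Y = 0, Z = z]`. -/
noncomputable def fpr {X : Type*} [Fintype X] (P : X × Bool × Bool → ℝ) (f : X × Bool → ℝ)
    (z : Bool) : ℝ :=
  (∑ x, f (x, z) * P (x, z, false)) / (∑ x, P (x, z, false))

/-- `f` is a (group-wise) mass-threshold classifier: within each group it accepts a
prefix of the cells sorted in decreasing order of score (fractionally at the boundary). -/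
def IsPrefix {X : Type*} (P : X × Bool × Bool → ℝ) (f : X × Bool → ℝ) : Prop :=
  ∀ z x x', 0 < cellMass P x z → 0 < cellMass P x' z →
    score P x' z < score P x z → 0 < f (x', z) → f (x, z) = 1

/-- cells of equal score within a group have been merged, i.e. scores of distinct
positive-mass cells within a group are distinct ("strictly decreasing" when sorted). -/
def MergedScores {X : Type*} (P : X × Bool × Bool → ℝ) : Prop :=
  ∀ z x x', 0 < cellMass P x z → 0 < cellMass P x' z → score P x z = score P x' z → x = x'

/-- The example distribution: group `true` has one cell `(0,true)` of mass `1/4`, all label 1;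
group `false` has cell `(0,false)` of mass `1/2` all label 1 and cell `(1,false)` of mass
`1/4` all label 0. -/
noncomputable def Pex : Fin 2 × Bool × Bool → ℝ := fun p =>
  if p = (0, true, true) then 1/4
  else if p = (0, false, true) then 1/2
  else if p = (1, false, false) then 1/4
  else 0

lemma Pex_nonneg : ∀ p, 0 ≤ Pex p := by
  intro p
  unfold Pex
  split_ifs <;> norm_num

/-- the randomized witness classifier -/
noncomputable def fr : Fin 2 × Bool → ℝ := fun p =>
  if p = (0, true) then 2/3 else if p = (0, false) then 1 else 0

/-- There is a finite distribution on which the optimal randomized DP-fair classifier is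
strictly more accurate than the optimal deterministic DP-fair classifier. -/
theorem stmt0 :
    ∃ P : Fin 2 × Bool × Bool → ℝ, IsDist P ∧ (∀ z, 0 < gMass P z) ∧
      sInf {l : ℝ | ∃ f, InUnit f ∧ DP P f ∧ loss P f = l} <
        sInf {l : ℝ | ∃ f : Fin 2 × Bool → ℝ,
          (∀ p, f p = 0 ∨ f p = 1) ∧ DP P f ∧ loss P f = l} := by
  
  refine ⟨Pex, ⟨Pex_nonneg, ?_⟩, ?_, ?_⟩
  · simp [Fintype.sum_prod_type, Fin.sum_univ_two, Pex]
    norm_num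
  · intro z
    cases z <;> simp [gMass, cellMass, Fin.sum_univ_two, Pex] <;> norm_num
  · have hloss_fr : loss Pex fr = 1/12 := by
      simp [loss, Fin.sum_univ_two, Pex, fr]
      norm_num
    have hDP_fr : DP Pex fr := by
      simp [DP, selRate, gMass, cellMass, Fin.sum_univ_two, Pex, fr]
      norm_num
    have hInUnit_fr : InUnit fr := by
      intro p
      unfold fr
      split_ifs <;> constructor <;> norm_num
    have hmemL : (1/12 : ℝ) ∈ {l : ℝ | ∃ f, InUnit f ∧ DP Pex f ∧ loss Pex f = l} :=
      ⟨fr, hInUnit_fr, hDP_fr, hloss_fr⟩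
    have hbddL : BddBelow {l : ℝ | ∃ f, InUnit f ∧ DP Pex f ∧ loss Pex f = l} := by
      refine ⟨0, ?_⟩
      rintro l ⟨f, hf, -, rfl⟩
      apply Finset.sum_nonneg
      intro x _
      apply Finset.sum_nonneg
      intro z _
      have h1 := (hf (x, z)).1
      have h2 := (hf (x, z)).2
      have := Pex_nonneg (x, z, true)
      have := Pex_nonneg (x, z, false)
      nlinarith
    -- RHS nonempty: f = 0
    have hmemR : (3/4 : ℝ) ∈ {l : ℝ | ∃ f : Fin 2 × Bool → ℝ,
        (∀ p, f p = 0 ∨ f p = 1) ∧ DP Pex f ∧ loss Pex f = l} := by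
      refine ⟨fun _ => 0, fun p => Or.inl rfl, ?_, ?_⟩
      · simp [DP, selRate]
      · simp [loss, Fin.sum_univ_two, Pex]
        norm_num
    -- RHS lower bound
    have hlbR : ∀ l ∈ {l : ℝ | ∃ f : Fin 2 × Bool → ℝ,
        (∀ p, f p = 0 ∨ f p = 1) ∧ DP Pex f ∧ loss Pex f = l}, (1/4 : ℝ) ≤ l := by
      rintro l ⟨f, hf, hdp, rfl⟩
      have hdp' : selRate Pex f true = selRate Pex f false := hdp
      rcases hf (0, true) with h0t | h0t <;>
      rcases hf (0, false) with h0f | h0f <;>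
      rcases hf (1, false) with h1f | h1f <;>
      · simp only [DP, selRate, gMass, cellMass, loss, Fin.sum_univ_two, Pex] at hdp' ⊢
        norm_num [h0t, h0f, h1f] at hdp'
        all_goals (norm_num [h0t, h0f, h1f] <;> linarith)
    calc sInf {l : ℝ | ∃ f, InUnit f ∧ DP Pex f ∧ loss Pex f = l}
        ≤ 1/12 := csInf_le hbddL hmemL
      _ < 1/4 := by norm_num
      _ ≤ sInf {l : ℝ | ∃ f : Fin 2 × Bool → ℝ,
          (∀ p, f p = 0 ∨ f p = 1) ∧ DP Pex f ∧ loss Pex f = l} :=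
        le_csInf ⟨3/4, hmemR⟩ hlbR
end

section
/- Among all randomized classifiers with a fixed selection rate r on each group (hence satisfying Demographic Parity), the mass-threshold classifier T̃_r minimizes the 0-1 loss; moreover any such classifier f whose acceptance behavior differs from T̃_r on a set of positive probability has strictly larger loss. -/
open Finset

/-!
Within each group `z` the selection-rate constraint says `∑ₓ (f - g)(x, z) · m(x, z) = 0`,
where `m` is the cell mass. The loss gap `loss g - loss f` of group `z` is
`∑ₓ (f - g)(x, z) · (2 s(x, z) - 1) · m(x, z)` with `s` the score, so the constraint lets us
replace `2 s - 1` by `2 (s - t)` for any `t`. Taking for `t` a threshold of `f` (accept everything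
scoring above `t`, reject everything below), every summand `(f - g)(s - t)` is nonnegative, and
it is positive wherever `f ≠ g` off the threshold. Since scores within a group are distinct, at
most one cell sits at the threshold, and the constraint forbids `f` and `g` from differing there
alone.
-/

theorem exists_separating_of_forall_le {ι α : Type*} [LinearOrder α] [Nonempty α]
    (A B : Finset ι) (s : ι → α) (h : ∀ a ∈ A, ∀ b ∈ B, s a ≤ s b) :
    ∃ t, (∀ a ∈ A, s a ≤ t) ∧ ∀ b ∈ B, t ≤ s b := by
  rcases A.eq_empty_or_nonempty with rfl | hA
  · obtain ⟨t, ht⟩ := (B.image s).bddBelow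
    exact ⟨t, by simp, fun b hb => ht (by simpa using mem_image_of_mem s hb)⟩
  · exact ⟨A.sup' hA s, fun a ha => A.le_sup' s ha,
      fun b hb => A.sup'_le hA s fun a ha => h a ha b hb⟩

theorem sub_mul_pos_of_threshold {a b u : ℝ} (hb : b ∈ Set.Icc (0 : ℝ) 1)
    (ha1 : 0 < u → a = 1) (ha0 : u < 0 → a = 0) (hab : a ≠ b) (hu : u ≠ 0) :
    0 < (a - b) * u := by
  rcases hu.lt_or_gt with hu | hu
  · rw [ha0 hu] at hab ⊢
    nlinarith [lt_of_le_of_ne hb.1 hab]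
  · rw [ha1 hu] at hab ⊢
    nlinarith [lt_of_le_of_ne hb.2 (Ne.symm hab)]

theorem sub_mul_nonneg_of_threshold {a b u : ℝ} (hb : b ∈ Set.Icc (0 : ℝ) 1)
    (ha1 : 0 < u → a = 1) (ha0 : u < 0 → a = 0) : 0 ≤ (a - b) * u := by
  rcases eq_or_ne a b with rfl | hab
  · simp
  rcases eq_or_ne u 0 with rfl | hu
  · simp
  exact (sub_mul_pos_of_threshold hb ha1 ha0 hab hu).le

section Threshold

variable {X : Type*} {P : X × Bool × Bool → ℝ} {f g : X × Bool → ℝ} {z : Bool} {t : ℝ}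

def IsThreshold (P : X × Bool × Bool → ℝ) (f : X × Bool → ℝ) (z : Bool) (t : ℝ) :
    Prop :=
  ∀ x, 0 < cellMass P x z →
    (t < score P x z → f (x, z) = 1) ∧ (score P x z < t → f (x, z) = 0)

noncomputable def lossGap [Fintype X] (P : X × Bool × Bool → ℝ) (f g : X × Bool → ℝ)
    (z : Bool) : ℝ :=
  ∑ x, (f (x, z) - g (x, z)) * (P (x, z, true) - P (x, z, false))

theorem cellMass_nonneg (hP0 : ∀ p, 0 ≤ P p) (x : X) (z : Bool) : 0 ≤ cellMass P x z :=
  add_nonneg (hP0 (x, z, false)) (hP0 (x, z, true))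

theorem score_mul_cellMass (hP0 : ∀ p, 0 ≤ P p) (x : X) (z : Bool) :
    score P x z * cellMass P x z = P (x, z, true) := by
  by_cases hm : cellMass P x z = 0
  · have : P (x, z, true) = 0 := by
      unfold cellMass at hm
      linarith [hP0 (x, z, false), hP0 (x, z, true)]
    simp [hm, this]
  · exact div_mul_cancel₀ _ hm

theorem IsPrefix.exists_isThreshold [Finite X] (hf1 : InUnit f) (hf2 : IsPrefix P f)
    (z : Bool) : ∃ t, IsThreshold P f z t := by
  classical
  have := Fintype.ofFinite X
  set T := univ.filter fun x => 0 < cellMass P x z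
  have hsep : ∀ a ∈ T.filter (fun x => f (x, z) < 1),
      ∀ b ∈ T.filter (fun x => 0 < f (x, z)), score P a z ≤ score P b z := by
    intro a ha b hb
    simp only [T, mem_filter, mem_univ, true_and] at ha hb
    by_contra hlt
    exact (hf2 z a b ha.1 hb.1 (not_le.mp hlt) hb.2).not_lt ha.2
  obtain ⟨t, hA, hB⟩ := exists_separating_of_forall_le _ _ _ hsep
  refine ⟨t, fun x hx => ⟨fun hlt => ?_, fun hlt => ?_⟩⟩
  · by_contra hne
    have := hA x (by simp [T, hx, lt_of_le_of_ne (hf1 (x, z)).2 hne])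
    linarith
  · by_contra hne
    have := hB x (by simp [T, hx, lt_of_le_of_ne (hf1 (x, z)).1 (Ne.symm hne)])
    linarith

theorem IsThreshold.sub_mul_sub_pos (ht : IsThreshold P f z t) (hg1 : InUnit g) {x : X}
    (hx : 0 < cellMass P x z) (hfg : f (x, z) ≠ g (x, z)) (hxt : score P x z ≠ t) :
    0 < (f (x, z) - g (x, z)) * (score P x z - t) :=
  sub_mul_pos_of_threshold (hg1 (x, z)) (fun h => (ht x hx).1 (sub_pos.mp h))
    (fun h => (ht x hx).2 (sub_neg.mp h)) hfg (sub_ne_zero.mpr hxt)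

theorem IsThreshold.sub_mul_sub_mul_nonneg (ht : IsThreshold P f z t) (hP0 : ∀ p, 0 ≤ P p)
    (hg1 : InUnit g) (x : X) :
    0 ≤ (f (x, z) - g (x, z)) * (score P x z - t) * cellMass P x z := by
  rcases (cellMass_nonneg hP0 x z).eq_or_lt with hm | hm
  · rw [← hm, mul_zero]
  · exact mul_nonneg (sub_mul_nonneg_of_threshold (hg1 (x, z))
      (fun h => (ht x hm).1 (sub_pos.mp h)) (fun h => (ht x hm).2 (sub_neg.mp h))) hm.le

theorem sum_sub_mul_cellMass_eq_zero [Fintype X] (hgz : 0 < gMass P z)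
    (h : selRate P f z = selRate P g z) :
    ∑ x, (f (x, z) - g (x, z)) * cellMass P x z = 0 := by
  unfold selRate at h
  rw [div_left_inj' hgz.ne'] at h
  simp only [sub_mul, sum_sub_distrib, h, sub_self]

theorem loss_sub_loss [Fintype X] : loss P g - loss P f = ∑ z, lossGap P f g z := by
  unfold loss lossGap
  rw [← sum_sub_distrib, sum_comm]
  refine sum_congr rfl fun z _ => ?_
  rw [← sum_sub_distrib]
  exact sum_congr rfl fun x _ => by ring

theorem lossGap_eq_sum_mul_sub [Fintype X] (hP0 : ∀ p, 0 ≤ P p) (t : ℝ)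
    (hsel : ∑ x, (f (x, z) - g (x, z)) * cellMass P x z = 0) :
    lossGap P f g z = 2 * ∑ x, (f (x, z) - g (x, z)) * (score P x z - t) * cellMass P x z := by
  calc lossGap P f g z
      = ∑ x, (2 * ((f (x, z) - g (x, z)) * (score P x z - t) * cellMass P x z)
          + (2 * t - 1) * ((f (x, z) - g (x, z)) * cellMass P x z)) := by
        refine sum_congr rfl fun x _ => ?_
        have hm : cellMass P x z = P (x, z, false) + P (x, z, true) := rfl
        linear_combination (-2 * (f (x, z) - g (x, z))) * score_mul_cellMass hP0 x z
          + (f (x, z) - g (x, z)) * hm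
    _ = _ := by rw [sum_add_distrib, ← mul_sum, ← mul_sum, hsel]; ring

theorem IsThreshold.lossGap_nonneg [Fintype X] (ht : IsThreshold P f z t)
    (hP0 : ∀ p, 0 ≤ P p) (hg1 : InUnit g)
    (hsel : ∑ x, (f (x, z) - g (x, z)) * cellMass P x z = 0) :
    0 ≤ lossGap P f g z := by
  rw [lossGap_eq_sum_mul_sub hP0 t hsel]
  exact mul_nonneg zero_le_two (sum_nonneg fun x _ => ht.sub_mul_sub_mul_nonneg hP0 hg1 x)

theorem IsThreshold.lossGap_pos [Fintype X] (ht : IsThreshold P f z t)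
    (hP0 : ∀ p, 0 ≤ P p) (hm : MergedScores P) (hg1 : InUnit g)
    (hsel : ∑ x, (f (x, z) - g (x, z)) * cellMass P x z = 0)
    (hdiff : ∃ x, 0 < cellMass P x z ∧ f (x, z) ≠ g (x, z)) :
    0 < lossGap P f g z := by
  classical
  obtain ⟨x, hx, hfg⟩ := hdiff
  have hoff : ∃ y, 0 < cellMass P y z ∧ f (y, z) ≠ g (y, z) ∧ score P y z ≠ t := by
    by_cases hxt : score P x z = t
    · -- `x` alone cannot carry a nonzero share of the balanced sum `hsel`.
      have hwx : (f (x, z) - g (x, z)) * cellMass P x z ≠ 0 :=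
        mul_ne_zero (sub_ne_zero.mpr hfg) hx.ne'
      obtain ⟨y, hy, hwy⟩ := exists_ne_zero_of_sum_ne_zero (s := univ.erase x)
        (f := fun y => (f (y, z) - g (y, z)) * cellMass P y z)
        (by rw [sum_erase_eq_sub (mem_univ x), hsel]; simpa using hwx)
      obtain ⟨hfgy, hmy⟩ := mul_ne_zero_iff.mp hwy
      have hmy : 0 < cellMass P y z := (cellMass_nonneg hP0 y z).lt_of_ne' hmy
      refine ⟨y, hmy, sub_ne_zero.mp hfgy, fun hyt => ?_⟩
      exact ne_of_mem_erase hy (hm z y x hmy hx (hyt.trans hxt.symm))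
    · exact ⟨x, hx, hfg, hxt⟩
  obtain ⟨y, hmy, hfgy, hyt⟩ := hoff
  rw [lossGap_eq_sum_mul_sub hP0 t hsel]
  exact mul_pos two_pos (sum_pos' (fun x _ => ht.sub_mul_sub_mul_nonneg hP0 hg1 x)
    ⟨y, mem_univ y, mul_pos (ht.sub_mul_sub_pos hg1 hmy hfgy hyt) hmy⟩)

end Threshold

theorem stmt3_general {X : Type*} [Fintype X] (P : X × Bool × Bool → ℝ) (hP : IsDist P)
    (hg : ∀ z, 0 < gMass P z) (hm : MergedScores P)
    (r : ℝ)
    (f : X × Bool → ℝ) (hf1 : InUnit f) (hf2 : IsPrefix P f)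
    (hf3 : ∀ z, selRate P f z = r)
    (g : X × Bool → ℝ) (hg1 : InUnit g) (hg3 : ∀ z, selRate P g z = r) :
    loss P f ≤ loss P g ∧
      ((∃ x z, 0 < cellMass P x z ∧ f (x, z) ≠ g (x, z)) → loss P f < loss P g) := by
  obtain ⟨hP0, -⟩ := hP
  have hsel z := sum_sub_mul_cellMass_eq_zero (hg z) ((hf3 z).trans (hg3 z).symm)
  choose t ht using hf2.exists_isThreshold hf1
  have hgap z : 0 ≤ lossGap P f g z := (ht z).lossGap_nonneg hP0 hg1 (hsel z)
  rw [← sub_nonneg, ← sub_pos, loss_sub_loss]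
  refine ⟨sum_nonneg fun z _ => hgap z, fun ⟨x, z, hx, hfg⟩ => ?_⟩
  exact sum_pos' (fun z _ => hgap z)
    ⟨z, mem_univ z, (ht z).lossGap_pos hP0 hm hg1 (hsel z) ⟨x, hx, hfg⟩⟩

/-- Among randomized classifiers with selection rate `r` on each group, the
mass-threshold classifier minimizes the 0-1 loss; any competitor differing from it on a
positive-mass point has strictly larger loss. -/
theorem stmt3 {X : Type*} [Fintype X] (P : X × Bool × Bool → ℝ) (hP : IsDist P)
    (hg : ∀ z, 0 < gMass P z) (hm : MergedScores P)
    (r : ℝ) (hr : r ∈ Set.Icc (0 : ℝ) 1)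
    (f : X × Bool → ℝ) (hf1 : InUnit f) (hf2 : IsPrefix P f)
    (hf3 : ∀ z, selRate P f z = r)
    (g : X × Bool → ℝ) (hg1 : InUnit g) (hg3 : ∀ z, selRate P g z = r) :
    loss P f ≤ loss P g ∧
      ((∃ x z, 0 < cellMass P x z ∧ f (x, z) ≠ g (x, z)) → loss P f < loss P g) :=
  stmt3_general P hP hg hm r f hf1 hf2 hf3 g hg1 hg3
end

section
/- The function r ↦ L(T̃_r), mapping the common selection rate r ∈ [0,1] to the 0-1 loss of the mass-threshold DP-fair classifier T̃_r, is a continuous, piecewise linear, convex function on [0,1]. -/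
open Finset

section Aux
open scoped Classical

variable {X : Type*} [Fintype X] (P : X × Bool × Bool → ℝ)

noncomputable def sP (z : Bool) : Finset X := univ.filter fun x => 0 < cellMass P x z

noncomputable def nP (z : Bool) : ℕ := (sP P z).card

noncomputable def keyP (z : Bool) (x : X) : Lex (ℝ × Fin (Fintype.card X)) :=
  toLex (-(score P x z), Fintype.equivFin X x)

lemma keyP_inj (z : Bool) : Function.Injective (keyP P z) := by
  intro a b h
  have := congrArg (fun k => (ofLex k).2) h
  exact (Fintype.equivFin X).injective this

noncomputable def KP (z : Bool) : Finset (Lex (ℝ × Fin (Fintype.card X))) :=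
  (sP P z).image (keyP P z)

lemma KP_card (z : Bool) : (KP P z).card = nP P z :=
  Finset.card_image_of_injective _ (keyP_inj P z)

noncomputable def isoP (z : Bool) : Fin (nP P z) ≃o {k // k ∈ KP P z} :=
  (KP P z).orderIsoOfFin (KP_card P z)

noncomputable def enumP (z : Bool) (i : Fin (nP P z)) : X :=
  (Finset.mem_image.1 ((isoP P z) i).2).choose

lemma enumP_mem (z : Bool) (i : Fin (nP P z)) : enumP P z i ∈ sP P z :=
  (Finset.mem_image.1 ((isoP P z) i).2).choose_spec.1

lemma keyP_enum (z : Bool) (i : Fin (nP P z)) :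
    keyP P z (enumP P z i) = ((isoP P z) i : Lex (ℝ × Fin (Fintype.card X))) :=
  (Finset.mem_image.1 ((isoP P z) i).2).choose_spec.2

noncomputable def idxP (z : Bool) (x : X) : ℕ :=
  if h : x ∈ sP P z then
    (((isoP P z).symm ⟨keyP P z x, Finset.mem_image_of_mem _ h⟩ : Fin (nP P z)) : ℕ)
  else 0

noncomputable def cP (z : Bool) (i : ℕ) : ℝ :=
  if h : i < nP P z then cellMass P (enumP P z ⟨i, h⟩) z else 0

noncomputable def MP (z : Bool) (k : ℕ) : ℝ := ∑ i ∈ range k, cP P z i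

noncomputable def wP (z : Bool) (i : ℕ) : ℝ :=
  if h : i < nP P z then 1 - 2 * score P (enumP P z ⟨i, h⟩) z else 0

noncomputable def fcP (r : ℝ) : X × Bool → ℝ := fun p =>
  if h : p.1 ∈ sP P p.2 then
    min 1 (max 0 ((r * gMass P p.2 - MP P p.2 (idxP P p.2 p.1)) / cellMass P p.1 p.2))
  else 0

noncomputable def GP (z : Bool) (m : ℝ) : ℝ :=
  ∑ i ∈ range (nP P z), wP P z i * (min m (MP P z (i + 1)) - min m (MP P z i))

noncomputable def GhP (z : Bool) (m : ℝ) : ℝ :=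
  wP P z 0 * m + ∑ j ∈ Ico 1 (nP P z), (wP P z j - wP P z (j - 1)) * max 0 (m - MP P z j)

noncomputable def CtotP : ℝ := ∑ x, ∑ z, P (x, z, true)

noncomputable def HP (r : ℝ) : ℝ :=
  CtotP P + GhP P true (r * gMass P true) + GhP P false (r * gMass P false)

lemma mem_sP {z : Bool} {x : X} : x ∈ sP P z ↔ 0 < cellMass P x z := by
  simp [sP]

lemma cell_nonneg (hP : IsDist P) (x : X) (z : Bool) : 0 ≤ cellMass P x z :=
  add_nonneg (hP.1 _) (hP.1 _)

lemma cell_eq_zero (hP : IsDist P) {x : X} {z : Bool} (h : x ∉ sP P z) :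
    cellMass P x z = 0 :=
  le_antisymm (not_lt.1 (by simpa [mem_sP] using h)) (cell_nonneg P hP x z)

lemma P_eq_zero (hP : IsDist P) {x : X} {z : Bool} (h : x ∉ sP P z) (y : Bool) :
    P (x, z, y) = 0 := by
  have h0 := cell_eq_zero P hP h
  have h1 := hP.1 (x, z, false)
  have h2 := hP.1 (x, z, true)
  unfold cellMass at h0
  cases y <;> linarith

lemma cell_enum_pos (z : Bool) (i : Fin (nP P z)) : 0 < cellMass P (enumP P z i) z :=
  (mem_sP P).1 (enumP_mem P z i)

lemma score_anti (z : Bool) {i k : Fin (nP P z)} (h : i ≤ k) :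
    score P (enumP P z k) z ≤ score P (enumP P z i) z := by
  have h1 : (isoP P z) i ≤ (isoP P z) k := (isoP P z).monotone h
  have h2 : keyP P z (enumP P z i) ≤ keyP P z (enumP P z k) := by
    rw [keyP_enum, keyP_enum]; exact_mod_cast h1
  rcases (Prod.Lex.le_iff).1 h2 with h3 | h3
  · have : -(score P (enumP P z i) z) < -(score P (enumP P z k) z) := h3
    linarith
  · have : -(score P (enumP P z i) z) = -(score P (enumP P z k) z) := h3.1
    linarith

lemma idx_lt (z : Bool) {x : X} (h : x ∈ sP P z) : idxP P z x < nP P z := by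
  rw [idxP, dif_pos h]; exact ((isoP P z).symm _).2

lemma enum_idx (z : Bool) {x : X} (h : x ∈ sP P z) :
    enumP P z ⟨idxP P z x, idx_lt P z h⟩ = x := by
  apply keyP_inj P z
  rw [keyP_enum]
  have heq : (⟨idxP P z x, idx_lt P z h⟩ : Fin (nP P z)) =
      (isoP P z).symm ⟨keyP P z x, Finset.mem_image_of_mem _ h⟩ := by
    apply Fin.ext
    show idxP P z x = _
    rw [idxP, dif_pos h]
  rw [heq, OrderIso.apply_symm_apply]

lemma idx_enum (z : Bool) (i : Fin (nP P z)) : idxP P z (enumP P z i) = i := by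
  rw [idxP, dif_pos (enumP_mem P z i)]
  have : (⟨keyP P z (enumP P z i), Finset.mem_image_of_mem _ (enumP_mem P z i)⟩ :
      {k // k ∈ KP P z}) = (isoP P z) i := by
    apply Subtype.ext
    exact keyP_enum P z i
  rw [this, OrderIso.symm_apply_apply]

lemma cP_nonneg (z : Bool) (i : ℕ) : 0 ≤ cP P z i := by
  rw [cP]
  split
  · exact le_of_lt (cell_enum_pos P z _)
  · exact le_refl 0

lemma MP_mono (z : Bool) : Monotone (MP P z) := by
  intro a b hab
  exact Finset.sum_le_sum_of_subset_of_nonneg (Finset.range_subset_range.2 hab)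
    (fun i _ _ => cP_nonneg P z i)

lemma MP_zero (z : Bool) : MP P z 0 = 0 := by simp [MP]

lemma MP_nonneg (z : Bool) (k : ℕ) : 0 ≤ MP P z k := by
  rw [← MP_zero P z]; exact MP_mono P z (Nat.zero_le k)

lemma MP_succ (z : Bool) (i : Fin (nP P z)) :
    MP P z (i + 1) = MP P z i + cellMass P (enumP P z i) z := by
  rw [MP, MP, Finset.sum_range_succ, cP, dif_pos i.isLt, Fin.eta]

lemma sum_enum (z : Bool) (F : X → ℝ) :
    ∑ i : Fin (nP P z), F (enumP P z i) = ∑ x ∈ sP P z, F x := by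
  apply Finset.sum_bij (fun i _ => enumP P z i)
  · intro i _; exact enumP_mem P z i
  · intro i _ j _ hij
    have : (isoP P z) i = (isoP P z) j :=
      Subtype.ext (by rw [← keyP_enum, ← keyP_enum, hij])
    exact (isoP P z).injective this
  · intro x hx; exact ⟨⟨idxP P z x, idx_lt P z hx⟩, mem_univ _, enum_idx P z hx⟩
  · intro i _; rfl

lemma sum_cell_sP (hP : IsDist P) (z : Bool) :
    ∑ x ∈ sP P z, cellMass P x z = gMass P z := by
  rw [gMass]
  exact Finset.sum_subset (subset_univ _) (fun x _ hx => cell_eq_zero P hP hx)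

lemma MP_top (hP : IsDist P) (z : Bool) : MP P z (nP P z) = gMass P z := by
  rw [MP, ← sum_cell_sP P hP z, ← sum_enum P z (fun x => cellMass P x z)]
  rw [← Fin.sum_univ_eq_sum_range (fun i => cP P z i)]
  apply Finset.sum_congr rfl
  intro i _
  rw [cP, dif_pos i.isLt, Fin.eta]

lemma gMass_nonneg (hP : IsDist P) (z : Bool) : 0 ≤ gMass P z :=
  Finset.sum_nonneg (fun x _ => cell_nonneg P hP x z)

lemma clamp_mul {m M cc : ℝ} (hc : 0 < cc) :
    min 1 (max 0 ((m - M) / cc)) * cc = min m (M + cc) - min m M := by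
  rcases le_total m M with h | h
  · have h1 : (m - M) / cc ≤ 0 := div_nonpos_of_nonpos_of_nonneg (by linarith) (le_of_lt hc)
    rw [max_eq_left h1, min_eq_right (le_of_lt one_pos), zero_mul,
      min_eq_left h, min_eq_left (by linarith : m ≤ M + cc)]
    ring
  · rcases le_total m (M + cc) with h2 | h2
    · have h1 : 0 ≤ (m - M) / cc := div_nonneg (by linarith) (le_of_lt hc)
      have h3 : (m - M) / cc ≤ 1 := (div_le_one hc).2 (by linarith)
      rw [max_eq_right h1, min_eq_right h3, div_mul_cancel₀ _ (ne_of_gt hc),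
        min_eq_left h2, min_eq_right h]
    · have h1 : (1 : ℝ) ≤ (m - M) / cc := (le_div_iff₀ hc).2 (by linarith)
      rw [max_eq_right (le_trans zero_le_one h1), min_eq_left h1, one_mul,
        min_eq_right h2, min_eq_right (by linarith)]
      ring

lemma fc_apply {z : Bool} {x : X} (h : x ∈ sP P z) (r : ℝ) :
    fcP P r (x, z) =
      min 1 (max 0 ((r * gMass P z - MP P z (idxP P z x)) / cellMass P x z)) := by
  rw [fcP]; exact dif_pos h

lemma fc_apply_not {z : Bool} {x : X} (h : x ∉ sP P z) (r : ℝ) : fcP P r (x, z) = 0 := by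
  rw [fcP]; exact dif_neg h

lemma fc_inUnit (r : ℝ) : InUnit (fcP P r) := by
  intro p
  rw [fcP]
  split
  · exact ⟨le_min zero_le_one (le_max_left _ _), min_le_left _ _⟩
  · exact ⟨le_refl 0, zero_le_one⟩

lemma fc_mul_cell (z : Bool) (i : Fin (nP P z)) (r : ℝ) :
    fcP P r (enumP P z i, z) * cellMass P (enumP P z i) z =
      min (r * gMass P z) (MP P z (i + 1)) - min (r * gMass P z) (MP P z i) := by
  rw [fc_apply P (enumP_mem P z i), idx_enum, MP_succ]
  exact clamp_mul (cell_enum_pos P z i)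

lemma sum_fc (hP : IsDist P) (z : Bool) {r : ℝ} (hr0 : 0 ≤ r) (hr1 : r ≤ 1) :
    ∑ x, fcP P r (x, z) * cellMass P x z = r * gMass P z := by
  have hg0 := gMass_nonneg P hP z
  have hm0 : 0 ≤ r * gMass P z := mul_nonneg hr0 hg0
  have hm1 : r * gMass P z ≤ gMass P z := by nlinarith
  rw [← Finset.sum_subset (subset_univ (sP P z))
    (fun x _ hx => by rw [fc_apply_not P hx]; ring)]
  rw [← sum_enum P z (fun x => fcP P r (x, z) * cellMass P x z)]
  have : ∀ i : Fin (nP P z), fcP P r (enumP P z i, z) * cellMass P (enumP P z i) z =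
      (fun k => min (r * gMass P z) (MP P z k)) (↑i + 1) -
      (fun k => min (r * gMass P z) (MP P z k)) ↑i := fun i => fc_mul_cell P z i r
  rw [Finset.sum_congr rfl (fun i _ => this i),
    Fin.sum_univ_eq_sum_range (fun k => (fun k => min (r * gMass P z) (MP P z k)) (k + 1) -
      (fun k => min (r * gMass P z) (MP P z k)) k)]
  beta_reduce
  rw [Finset.sum_range_sub (fun k => min (r * gMass P z) (MP P z k)), MP_top P hP,
    MP_zero, min_eq_left hm1, min_eq_right hm0]
  ring

lemma selRate_fc (hP : IsDist P) (hg : ∀ z, 0 < gMass P z) {r : ℝ}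
    (hr0 : 0 ≤ r) (hr1 : r ≤ 1) (z : Bool) : selRate P (fcP P r) z = r := by
  rw [selRate, sum_fc P hP z hr0 hr1]
  exact mul_div_cancel_right₀ r (ne_of_gt (hg z))

lemma fc_prefix (r : ℝ) : IsPrefix P (fcP P r) := by
  intro z x x' hx hx' hs hpos
  have hxs : x ∈ sP P z := (mem_sP P).2 hx
  have hx's : x' ∈ sP P z := (mem_sP P).2 hx'
  rw [fc_apply P hx's] at hpos
  have hpos2 : 0 < (r * gMass P z - MP P z (idxP P z x')) / cellMass P x' z := by
    rcases le_or_gt ((r * gMass P z - MP P z (idxP P z x')) / cellMass P x' z) 0 with h | h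
    · rw [max_eq_left h] at hpos
      simp at hpos
    · exact h
  have hm : MP P z (idxP P z x') < r * gMass P z := by
    have := (div_pos_iff.1 hpos2)
    rcases this with ⟨h1, _⟩ | ⟨_, h2⟩
    · linarith
    · linarith
  -- idx x < idx x'
  have hidx : idxP P z x < idxP P z x' := by
    by_contra hcon
    push_neg at hcon
    have hle : (⟨idxP P z x', idx_lt P z hx's⟩ : Fin (nP P z)) ≤ ⟨idxP P z x, idx_lt P z hxs⟩ :=
      hcon
    have := score_anti P z hle
    rw [enum_idx P z hxs, enum_idx P z hx's] at this
    linarith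
  have hMle : MP P z (idxP P z x + 1) ≤ MP P z (idxP P z x') := MP_mono P z hidx
  have hMsucc : MP P z (idxP P z x + 1) = MP P z (idxP P z x) + cellMass P x z := by
    have := MP_succ P z ⟨idxP P z x, idx_lt P z hxs⟩
    rwa [enum_idx P z hxs] at this
  rw [fc_apply P hxs]
  have h1 : (1 : ℝ) ≤ (r * gMass P z - MP P z (idxP P z x)) / cellMass P x z := by
    rw [le_div_iff₀ hx]
    linarith
  rw [max_eq_right (le_trans zero_le_one h1), min_eq_left h1]

lemma cell_score (hP : IsDist P) {z : Bool} {x : X} (hx : 0 < cellMass P x z) :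
    P (x, z, false) - P (x, z, true) = cellMass P x z * (1 - 2 * score P x z) := by
  rw [score]
  field_simp
  rw [cellMass]
  ring

lemma sum_fc_loss (hP : IsDist P) (z : Bool) (r : ℝ) :
    ∑ x, fcP P r (x, z) * (P (x, z, false) - P (x, z, true)) = GP P z (r * gMass P z) := by
  rw [← Finset.sum_subset (subset_univ (sP P z))
    (fun x _ hx => by rw [fc_apply_not P hx]; ring)]
  rw [← sum_enum P z (fun x => fcP P r (x, z) * (P (x, z, false) - P (x, z, true)))]
  rw [GP, ← Fin.sum_univ_eq_sum_range (fun i => wP P z i *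
    (min (r * gMass P z) (MP P z (i + 1)) - min (r * gMass P z) (MP P z i)))]
  apply Finset.sum_congr rfl
  intro i _
  rw [cell_score P hP (cell_enum_pos P z i)]
  have h1 : wP P z (i : ℕ) = 1 - 2 * score P (enumP P z i) z := by
    rw [wP, dif_pos i.isLt, Fin.eta]
  have h2 := fc_mul_cell P z i r
  have h3 : fcP P r (enumP P z i, z) * (cellMass P (enumP P z i) z *
      (1 - 2 * score P (enumP P z i) z)) =
      (fcP P r (enumP P z i, z) * cellMass P (enumP P z i) z) *
      (1 - 2 * score P (enumP P z i) z) := by ring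
  rw [h3, h2, h1]
  ring

lemma loss_fc (hP : IsDist P) (r : ℝ) :
    loss P (fcP P r) =
      CtotP P + GP P true (r * gMass P true) + GP P false (r * gMass P false) := by
  rw [loss]
  have h1 : ∀ x : X, ∀ z : Bool,
      P (x, z, true) * (1 - fcP P r (x, z)) + P (x, z, false) * fcP P r (x, z) =
      P (x, z, true) + fcP P r (x, z) * (P (x, z, false) - P (x, z, true)) := by
    intro x z; ring
  calc ∑ x, ∑ z, (P (x, z, true) * (1 - fcP P r (x, z)) + P (x, z, false) * fcP P r (x, z))
      = ∑ x, ∑ z, (P (x, z, true) + fcP P r (x, z) * (P (x, z, false) - P (x, z, true))) := by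
        exact Finset.sum_congr rfl (fun x _ => Finset.sum_congr rfl (fun z _ => h1 x z))
    _ = CtotP P + ∑ z : Bool, ∑ x, fcP P r (x, z) * (P (x, z, false) - P (x, z, true)) := by
        have h2 : ∀ x : X, ∑ z : Bool, (P (x, z, true) +
            fcP P r (x, z) * (P (x, z, false) - P (x, z, true))) =
            ∑ z : Bool, P (x, z, true) +
            ∑ z : Bool, fcP P r (x, z) * (P (x, z, false) - P (x, z, true)) :=
          fun x => Finset.sum_add_distrib
        rw [Finset.sum_congr rfl (fun x _ => h2 x), Finset.sum_add_distrib, CtotP]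
        congr 1
        exact Finset.sum_comm
    _ = CtotP P + GP P true (r * gMass P true) + GP P false (r * gMass P false) := by
        rw [Fintype.sum_bool, sum_fc_loss P hP true r, sum_fc_loss P hP false r]
        ring

lemma abel_sum (w g : ℕ → ℝ) (n : ℕ) :
    ∑ i ∈ range n, w i * (g i - g (i + 1)) =
      (w 0 * g 0 - (if n = 0 then w 0 * g 0 else w (n - 1) * g n)) +
        ∑ j ∈ Ico 1 n, (w j - w (j - 1)) * g j := by
  induction n with
  | zero => simp
  | succ n ih =>
    rw [Finset.sum_range_succ, ih]
    rcases Nat.eq_zero_or_pos n with h | h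
    · subst h
      simp
      ring
    · rw [if_neg (by omega), if_neg (by omega)]
      rw [Finset.sum_Ico_succ_top (by omega)]
      have hn : n + 1 - 1 = n := by omega
      rw [hn]
      ring

lemma min_max_aux (m a : ℝ) : min m a = m - max 0 (m - a) := by
  rcases le_total m a with h | h
  · rw [min_eq_left h, max_eq_left (by linarith)]; ring
  · rw [min_eq_right h, max_eq_right (by linarith)]; ring

lemma wP_zero_of_nP_zero (h : nP P z = 0) : wP P z 0 = 0 := by
  rw [wP, dif_neg (by omega)]

lemma GP_eq_GhP (hP : IsDist P) (z : Bool) {m : ℝ} (hm0 : 0 ≤ m) (hm1 : m ≤ gMass P z) :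
    GP P z m = GhP P z m := by
  have hterm : ∀ i : ℕ, min m (MP P z (i + 1)) - min m (MP P z i) =
      (fun k => max 0 (m - MP P z k)) i - (fun k => max 0 (m - MP P z k)) (i + 1) := by
    intro i
    simp only
    rw [min_max_aux m (MP P z (i + 1)), min_max_aux m (MP P z i)]
    ring
  rw [GP, Finset.sum_congr rfl (fun i _ => by rw [hterm i]),
    abel_sum (wP P z) (fun k => max 0 (m - MP P z k)) (nP P z)]
  rw [GhP]
  rcases Nat.eq_zero_or_pos (nP P z) with h | h
  · rw [h]
    simp [wP_zero_of_nP_zero P h]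
  · rw [if_neg (by omega)]
    have hg0 : max 0 (m - MP P z 0) = m := by
      rw [MP_zero, max_eq_right (by linarith)]
      ring
    have hgn : max 0 (m - MP P z (nP P z)) = 0 := by
      rw [MP_top P hP, max_eq_left (by linarith)]
    rw [hg0, hgn]
    ring

lemma wP_mono (z : Bool) {j : ℕ} (h1 : 1 ≤ j) (h2 : j < nP P z) :
    wP P z (j - 1) ≤ wP P z j := by
  rw [wP, wP, dif_pos h2, dif_pos (by omega : j - 1 < nP P z)]
  have := score_anti P z (i := ⟨j - 1, by omega⟩) (k := ⟨j, h2⟩) (Fin.mk_le_mk.2 (by omega))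
  linarith

lemma cont_GhP (z : Bool) : Continuous (GhP P z) := by
  unfold GhP
  apply Continuous.add
  · exact continuous_const.mul continuous_id
  · apply continuous_finset_sum
    intro j _
    exact continuous_const.mul (continuous_const.max (continuous_id.sub continuous_const))

lemma convexOn_affine (p q : ℝ) : ConvexOn ℝ Set.univ (fun m : ℝ => p * m + q) := by
  refine ⟨convex_univ, ?_⟩
  intro x _ y _ a b _ _ hab
  simp only [smul_eq_mul]
  apply le_of_eq
  linear_combination (-q) * hab

lemma convexOn_kink (M : ℝ) : ConvexOn ℝ Set.univ (fun m : ℝ => max 0 (m - M)) := by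
  have h1 : ConvexOn ℝ Set.univ (fun _ : ℝ => (0 : ℝ)) := convexOn_const _ convex_univ
  have h2 : ConvexOn ℝ Set.univ (fun m : ℝ => m - M) := by
    have := convexOn_affine 1 (-M)
    simpa [sub_eq_add_neg] using this
  have h3 := h1.sup h2
  exact h3

lemma convexOn_finsum {ι : Type*} (t : Finset ι) (f : ι → ℝ → ℝ)
    (h : ∀ i ∈ t, ConvexOn ℝ Set.univ (f i)) :
    ConvexOn ℝ Set.univ (fun m => ∑ i ∈ t, f i m) := by
  classical
  induction t using Finset.induction_on with
  | empty => simpa using convexOn_const 0 convex_univ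
  | @insert a t ha ih =>
    have h1 : ConvexOn ℝ Set.univ (fun m => f a m + ∑ i ∈ t, f i m) :=
      (h a (Finset.mem_insert_self a t)).add (ih (fun i hi => h i (Finset.mem_insert_of_mem hi)))
    simpa [Finset.sum_insert ha] using h1

lemma convexOn_GhP (z : Bool) : ConvexOn ℝ Set.univ (GhP P z) := by
  unfold GhP
  apply ConvexOn.add
  · have := convexOn_affine (wP P z 0) 0
    simpa using this
  · apply convexOn_finsum
    intro j hj
    rw [Finset.mem_Ico] at hj
    have hκ : 0 ≤ wP P z j - wP P z (j - 1) := by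
      have := wP_mono P z hj.1 hj.2
      linarith
    have := (convexOn_kink (MP P z j)).smul hκ
    simpa [smul_eq_mul] using this

lemma convexOn_comp_mul {F : ℝ → ℝ} (hF : ConvexOn ℝ Set.univ F) (g : ℝ) :
    ConvexOn ℝ Set.univ (fun r => F (r * g)) := by
  refine ⟨convex_univ, ?_⟩
  intro x _ y _ a b ha hb hab
  have h2 := hF.2 (Set.mem_univ (x * g)) (Set.mem_univ (y * g)) ha hb hab
  simp only [smul_eq_mul] at h2 ⊢
  have h3 : (a * x + b * y) * g = a * (x * g) + b * (y * g) := by ring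
  rw [h3]
  exact h2

lemma convexOn_HP : ConvexOn ℝ Set.univ (HP P) := by
  unfold HP
  have h1 := (convexOn_comp_mul (convexOn_GhP P true) (gMass P true)).add
    (convexOn_comp_mul (convexOn_GhP P false) (gMass P false))
  have h2 := (convexOn_const (CtotP P) convex_univ).add h1
  refine ⟨convex_univ, fun x hx y hy a b ha hb hab => ?_⟩
  have := h2.2 hx hy ha hb hab
  simp only [Pi.add_apply, smul_eq_mul] at this ⊢
  linarith

lemma cont_HP : Continuous (HP P) := by
  unfold HP
  apply Continuous.add
  · exact continuous_const.add ((cont_GhP P true).comp (continuous_id.mul continuous_const))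
  · exact (cont_GhP P false).comp (continuous_id.mul continuous_const)

lemma L_eq_HP (hP : IsDist P) (hg : ∀ z, 0 < gMass P z) (L : ℝ → ℝ)
    (hL : ∀ r ∈ Set.Icc (0 : ℝ) 1, ∀ f : X × Bool → ℝ,
      InUnit f → IsPrefix P f → (∀ z, selRate P f z = r) → loss P f = L r)
    {r : ℝ} (hr : r ∈ Set.Icc (0 : ℝ) 1) : L r = HP P r := by
  have h1 := hL r hr (fcP P r) (fc_inUnit P r) (fc_prefix P r)
    (selRate_fc P hP hg hr.1 hr.2)
  rw [← h1, loss_fc P hP r, HP]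
  have hmm : ∀ z : Bool, GP P z (r * gMass P z) = GhP P z (r * gMass P z) := by
    intro z
    apply GP_eq_GhP P hP z (mul_nonneg hr.1 (le_of_lt (hg z)))
    nlinarith [hg z, hr.2]
  rw [hmm true, hmm false]

end Aux
/-- The map `r ↦ L(T̃_r)` (loss of the mass-threshold DP-fair classifier of selection
rate `r`) is continuous, convex and piecewise linear on `[0,1]`. -/
theorem stmt4 {X : Type*} [Fintype X] (P : X × Bool × Bool → ℝ) (hP : IsDist P)
    (hg : ∀ z, 0 < gMass P z) (L : ℝ → ℝ)
    (hL : ∀ r ∈ Set.Icc (0 : ℝ) 1, ∀ f : X × Bool → ℝ,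
      InUnit f → IsPrefix P f → (∀ z, selRate P f z = r) → loss P f = L r) :
    ContinuousOn L (Set.Icc 0 1) ∧ ConvexOn ℝ (Set.Icc 0 1) L ∧
      ∃ (n : ℕ) (t : Fin (n + 1) → ℝ), StrictMono t ∧ t 0 = 0 ∧ t (Fin.last n) = 1 ∧
        ∀ i : Fin n, ∃ c d : ℝ,
          ∀ r ∈ Set.Icc (t i.castSucc) (t i.succ), L r = c * r + d := by
  classical
  have hEq : ∀ r ∈ Set.Icc (0 : ℝ) 1, L r = HP P r := fun r hr => L_eq_HP P hP hg L hL hr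
  refine ⟨?_, ?_, ?_⟩
  · exact ((cont_HP P).continuousOn).congr hEq
  · refine ⟨convex_Icc 0 1, ?_⟩
    intro x hx y hy a b ha hb hab
    have hxy : a • x + b • y ∈ Set.Icc (0 : ℝ) 1 := (convex_Icc 0 1) hx hy ha hb hab
    rw [hEq _ hxy, hEq _ hx, hEq _ hy]
    exact (convexOn_HP P).2 (Set.mem_univ x) (Set.mem_univ y) ha hb hab
  · set B : Finset ℝ := insert 0 (insert 1
      ((((range (nP P true)).image (fun j => MP P true j / gMass P true)) ∪
        ((range (nP P false)).image (fun j => MP P false j / gMass P false))).filter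
          (fun p => 0 ≤ p ∧ p ≤ 1))) with hB
    have hBne : B.Nonempty := ⟨0, by simp [hB]⟩
    have h0B : (0 : ℝ) ∈ B := by simp [hB]
    have h1B : (1 : ℝ) ∈ B := by simp [hB]
    have hBnn : ∀ b ∈ B, 0 ≤ b ∧ b ≤ 1 := by
      intro b hb
      simp only [hB, Finset.mem_insert, Finset.mem_filter] at hb
      rcases hb with rfl | rfl | h
      · norm_num
      · norm_num
      · exact h.2
    obtain ⟨n, hn⟩ : ∃ n, B.card = n + 1 :=
      ⟨B.card - 1, (Nat.succ_pred_eq_of_pos (Finset.card_pos.2 hBne)).symm⟩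
    set tIso := B.orderIsoOfFin hn with htIso
    have hmem : ∀ i, (tIso i : ℝ) ∈ B := fun i => (tIso i).2
    have hmono : ∀ {i j : Fin (n + 1)}, i ≤ j → (tIso i : ℝ) ≤ (tIso j : ℝ) :=
      fun h => Subtype.coe_le_coe.2 (tIso.monotone h)
    have hsurj : ∀ p ∈ B, ∃ k, (tIso k : ℝ) = p := by
      intro p hp
      exact ⟨tIso.symm ⟨p, hp⟩, by rw [OrderIso.apply_symm_apply]⟩
    refine ⟨n, fun i => (tIso i : ℝ), ?_, ?_, ?_, ?_⟩
    · intro i j hij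
      exact Subtype.coe_lt_coe.2 (tIso.strictMono hij)
    · obtain ⟨k, hk⟩ := hsurj 0 h0B
      have h1 : (tIso 0 : ℝ) ≤ 0 := by rw [← hk]; exact hmono (Fin.zero_le k)
      exact le_antisymm h1 (hBnn _ (hmem 0)).1
    · obtain ⟨k, hk⟩ := hsurj 1 h1B
      have h1 : (1 : ℝ) ≤ (tIso (Fin.last n) : ℝ) := by rw [← hk]; exact hmono (Fin.le_last k)
      exact le_antisymm (hBnn _ (hmem (Fin.last n))).2 h1
    · intro i
      set a := (tIso i.castSucc : ℝ) with haa
      set b := (tIso i.succ : ℝ) with hbb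
      have hab : a ≤ b := hmono (Fin.castSucc_lt_succ : i.castSucc < i.succ).le
      have ha0 : 0 ≤ a := (hBnn _ (hmem i.castSucc)).1
      have hb1 : b ≤ 1 := (hBnn _ (hmem i.succ)).2
      have hdich : ∀ p ∈ B, p ≤ a ∨ b ≤ p := by
        intro p hp
        obtain ⟨k, hk⟩ := hsurj p hp
        rcases le_or_gt k i.castSucc with h | h
        · left; rw [← hk]; exact hmono h
        · right; rw [← hk]; exact hmono (Fin.castSucc_lt_iff_succ_le.1 h)
      have hkink : ∀ z : Bool, ∀ j ∈ Ico 1 (nP P z),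
          MP P z j ≤ a * gMass P z ∨ ∀ r ∈ Set.Icc a b, r * gMass P z ≤ MP P z j := by
        intro z j hj
        have hgz := hg z
        set p := MP P z j / gMass P z with hpdef
        have hpg : p * gMass P z = MP P z j := div_mul_cancel₀ _ (ne_of_gt hgz)
        have hp0 : 0 ≤ p := div_nonneg (MP_nonneg P z j) (le_of_lt hgz)
        rcases le_or_gt p 1 with hp1 | hp1
        · have hpB : p ∈ B := by
            rw [hB]
            apply Finset.mem_insert_of_mem
            apply Finset.mem_insert_of_mem
            rw [Finset.mem_filter]
            refine ⟨?_, hp0, hp1⟩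
            rw [Finset.mem_union]
            rcases Finset.mem_Ico.1 hj with ⟨_, hj2⟩
            cases z
            · right; exact Finset.mem_image_of_mem _ (Finset.mem_range.2 hj2)
            · left; exact Finset.mem_image_of_mem _ (Finset.mem_range.2 hj2)
          rcases hdich p hpB with h | h
          · left
            rw [← hpg]
            exact mul_le_mul_of_nonneg_right h (le_of_lt hgz)
          · right
            intro r hr
            rw [← hpg]
            exact mul_le_mul_of_nonneg_right (hr.2.trans h) (le_of_lt hgz)
        · right
          intro r hr
          rw [← hpg]
          exact mul_le_mul_of_nonneg_right (hr.2.trans (hb1.trans (le_of_lt hp1)))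
            (le_of_lt hgz)
      refine ⟨∑ z : Bool, gMass P z * (wP P z 0 + ∑ j ∈ Ico 1 (nP P z),
          (wP P z j - wP P z (j - 1)) * (if MP P z j ≤ a * gMass P z then 1 else 0)),
        CtotP P + ∑ z : Bool, ∑ j ∈ Ico 1 (nP P z),
          (wP P z j - wP P z (j - 1)) * (if MP P z j ≤ a * gMass P z then -(MP P z j) else 0),
        ?_⟩
      intro r hr
      have hrIcc : r ∈ Set.Icc (0 : ℝ) 1 := ⟨ha0.trans hr.1, hr.2.trans hb1⟩
      rw [hEq r hrIcc, HP]
      have hGh : ∀ z : Bool, GhP P z (r * gMass P z) = wP P z 0 * (r * gMass P z) +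
          ∑ j ∈ Ico 1 (nP P z), (wP P z j - wP P z (j - 1)) *
            (if MP P z j ≤ a * gMass P z then r * gMass P z - MP P z j else 0) := by
        intro z
        rw [GhP]
        congr 1
        apply Finset.sum_congr rfl
        intro j hj
        congr 1
        split_ifs with h
        · have h2 : a * gMass P z ≤ r * gMass P z :=
            mul_le_mul_of_nonneg_right hr.1 (le_of_lt (hg z))
          rw [max_eq_right (by linarith)]
        · rcases hkink z j hj with h' | h'
          · exact absurd h' h
          · have := h' r ⟨hr.1, hr.2⟩
            rw [max_eq_left (by linarith)]
      rw [hGh true, hGh false]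
      have key : ∀ z : Bool, wP P z 0 * (r * gMass P z) +
          ∑ j ∈ Ico 1 (nP P z), (wP P z j - wP P z (j - 1)) *
            (if MP P z j ≤ a * gMass P z then r * gMass P z - MP P z j else 0) =
          gMass P z * (wP P z 0 + ∑ j ∈ Ico 1 (nP P z), (wP P z j - wP P z (j - 1)) *
            (if MP P z j ≤ a * gMass P z then 1 else 0)) * r +
          ∑ j ∈ Ico 1 (nP P z), (wP P z j - wP P z (j - 1)) *
            (if MP P z j ≤ a * gMass P z then -(MP P z j) else 0) := by
        intro z
        have hterm : ∀ j ∈ Ico 1 (nP P z), (wP P z j - wP P z (j - 1)) *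
            (if MP P z j ≤ a * gMass P z then r * gMass P z - MP P z j else 0) =
            ((wP P z j - wP P z (j - 1)) *
              (if MP P z j ≤ a * gMass P z then 1 else 0)) * (gMass P z * r) +
            (wP P z j - wP P z (j - 1)) *
              (if MP P z j ≤ a * gMass P z then -(MP P z j) else 0) := by
          intro j _
          split_ifs <;> ring
        rw [Finset.sum_congr rfl hterm, Finset.sum_add_distrib, ← Finset.sum_mul]
        ring
      rw [key true, key false, Fintype.sum_bool, Fintype.sum_bool]
      ring
end

section
/- There exists r' ∈ [0,1] such that the mass-threshold classifier T̃_{r'} minimizes the 0-1 loss among all randomized classifiers satisfying Demographic Parity. -/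
open Finset

private lemma sum_two_point {X : Type*} [Fintype X] [DecidableEq X] (F G : X → ℝ)
    (x x' : X) (hxx : x ≠ x') (h : ∀ u, u ≠ x → u ≠ x' → F u = G u) :
    ∑ u, F u = (F x - G x) + (F x' - G x') + ∑ u, G u := by
  have h1 : ∑ u, F u - ∑ u, G u = ∑ u, (F u - G u) := (Finset.sum_sub_distrib _ _).symm
  have h2 : ∑ u, (F u - G u) = ∑ u ∈ ({x, x'} : Finset X), (F u - G u) := by
    symm
    apply Finset.sum_subset (Finset.subset_univ _)
    intro u _ hu
    simp only [Finset.mem_insert, Finset.mem_singleton, not_or] at hu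
    rw [h u hu.1 hu.2]; ring
  rw [Finset.sum_pair hxx] at h2
  linarith

/-- There is `r' ∈ [0,1]` such that the mass-threshold classifier of selection rate `r'`
minimizes the 0-1 loss among all randomized classifiers satisfying demographic parity. -/
theorem stmt7 {X : Type*} [Fintype X] (P : X × Bool × Bool → ℝ) (hP : IsDist P)
    (hg : ∀ z, 0 < gMass P z) :
    ∃ r' ∈ Set.Icc (0 : ℝ) 1, ∃ f : X × Bool → ℝ,
      InUnit f ∧ IsPrefix P f ∧ (∀ z, selRate P f z = r') ∧
      ∀ g : X × Bool → ℝ, InUnit g → DP P g → loss P f ≤ loss P g := by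
  classical
  have hPnn := hP.1
  have hcell : ∀ x z, 0 ≤ cellMass P x z := fun x z => add_nonneg (hPnn _) (hPnn _)
  -- the feasible set
  set K : Set ((X × Bool) → ℝ) :=
    (Set.pi Set.univ fun _ => Set.Icc (0 : ℝ) 1) ∩
      {f | selRate P f true = selRate P f false} with hKdef
  have hKmem : ∀ f : X × Bool → ℝ, f ∈ K ↔ InUnit f ∧ DP P f := by
    intro f
    simp only [hKdef, Set.mem_inter_iff, Set.mem_univ_pi, Set.mem_setOf_eq]
    exact Iff.rfl
  -- continuity of selection rates and loss
  have hselCont : ∀ z : Bool, Continuous fun f : (X × Bool) → ℝ => selRate P f z := by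
    intro z
    unfold selRate
    apply Continuous.div_const
    apply continuous_finset_sum
    intro x _
    exact (continuous_apply (x, z)).mul continuous_const
  have hlossCont : Continuous fun f : (X × Bool) → ℝ => loss P f := by
    unfold loss
    apply continuous_finset_sum
    intro x _
    apply continuous_finset_sum
    intro z _
    exact (continuous_const.mul (continuous_const.sub (continuous_apply (x, z)))).add
      (continuous_const.mul (continuous_apply (x, z)))
  have hKcomp : IsCompact K :=
    (isCompact_univ_pi fun _ => isCompact_Icc).inter_right
      (isClosed_eq (hselCont true) (hselCont false))
  have hKne : K.Nonempty := by
    refine ⟨fun _ => 0, ?_⟩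
    rw [hKmem]
    constructor
    · intro p; exact ⟨le_refl 0, zero_le_one⟩
    · simp [DP, selRate]
  obtain ⟨g, hgK, hmin⟩ := hKcomp.exists_isMinOn hKne hlossCont.continuousOn
  have hgU : InUnit g := ((hKmem g).1 hgK).1
  have hgDP : DP P g := ((hKmem g).1 hgK).2
  -- rewrite loss as a sum over pairs
  have hloss_eq : ∀ f : X × Bool → ℝ, loss P f =
      ∑ p : X × Bool, (P (p.1, p.2, true) * (1 - f p) + P (p.1, p.2, false) * f p) := by
    intro f
    rw [loss, Fintype.sum_prod_type]
  -- the minimizer is a prefix classifier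
  have hprefix : IsPrefix P g := by
    intro z x x' hm hm' hs hpos
    by_contra hne1
    have hxx' : x ≠ x' := by
      intro h; rw [h] at hs; exact lt_irrefl _ hs
    have hg1 : g (x, z) < 1 := lt_of_le_of_ne (hgU (x, z)).2 hne1
    set m := cellMass P x z with hm_def
    set m' := cellMass P x' z with hm'_def
    set δ : ℝ := min ((1 - g (x, z)) * m) (g (x', z) * m') with hδdef
    have hδ : 0 < δ := lt_min (mul_pos (by linarith) hm) (mul_pos hpos hm')
    set g' : X × Bool → ℝ := fun p =>
      if p = (x, z) then g (x, z) + δ / m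
      else if p = (x', z) then g (x', z) - δ / m' else g p with hg'def
    have hpair : ((x' : X), z) ≠ ((x : X), z) := by
      simp [Prod.ext_iff, hxx'.symm]
    have hg'x : g' (x, z) = g (x, z) + δ / m := by simp [hg'def]
    have hg'x' : g' (x', z) = g (x', z) - δ / m' := by
      simp [hg'def, hpair]
    have hg'other : ∀ p : X × Bool, p ≠ (x, z) → p ≠ (x', z) → g' p = g p := by
      intro p h1 h2; simp [hg'def, h1, h2]
    -- bounds
    have hd1 : δ / m ≤ 1 - g (x, z) := by
      rw [div_le_iff₀ hm]
      exact min_le_left _ _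
    have hd2 : δ / m' ≤ g (x', z) := by
      rw [div_le_iff₀ hm']
      exact min_le_right _ _
    have hg'U : InUnit g' := by
      intro p
      by_cases h1 : p = (x, z)
      · rw [h1, hg'x]
        constructor
        · have := (hgU (x, z)).1
          positivity
        · linarith
      · by_cases h2 : p = (x', z)
        · rw [h2, hg'x']
          refine ⟨by linarith, ?_⟩
          have h3 := (hgU (x', z)).2
          have h4 : 0 ≤ δ / m' := le_of_lt (div_pos hδ hm')
          linarith
        · rw [hg'other p h1 h2]; exact hgU p
    -- selection rates are unchanged
    have hsel : ∀ z'' : Bool, selRate P g' z'' = selRate P g z'' := by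
      intro z''
      unfold selRate
      congr 1
      by_cases hz : z'' = z
      · subst hz
        rw [sum_two_point (fun u => g' (u, z'') * cellMass P u z'')
          (fun u => g (u, z'') * cellMass P u z'') x x' hxx'
          (fun u h1 h2 => by
            rw [hg'other (u, z'') (by simp [Prod.ext_iff, h1]) (by simp [Prod.ext_iff, h2])])]
        rw [hg'x, hg'x']
        have e1 : (g (x, z'') + δ / m) * m - g (x, z'') * m = δ := by
          rw [add_mul, div_mul_cancel₀ δ (ne_of_gt hm)]; ring
        have e2 : (g (x', z'') - δ / m') * m' - g (x', z'') * m' = -δ := by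
          rw [sub_mul, div_mul_cancel₀ δ (ne_of_gt hm')]; ring
        linarith [e1, e2]
      · apply Finset.sum_congr rfl
        intro u _
        rw [hg'other (u, z'') (by simp [Prod.ext_iff, hz]) (by simp [Prod.ext_iff, hz])]
    have hg'K : g' ∈ K := by
      rw [hKmem]
      exact ⟨hg'U, by rw [DP, hsel true, hsel false]; exact hgDP⟩
    -- the loss strictly decreases
    have hscore : score P x z = P (x, z, true) / m := rfl
    have hscore' : score P x' z = P (x', z, true) / m' := rfl
    have hmsum : m = P (x, z, false) + P (x, z, true) := rfl
    have hmsum' : m' = P (x', z, false) + P (x', z, true) := rfl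
    have hlt : loss P g' < loss P g := by
      rw [hloss_eq g', hloss_eq g]
      rw [sum_two_point
        (fun p : X × Bool => P (p.1, p.2, true) * (1 - g' p) + P (p.1, p.2, false) * g' p)
        (fun p : X × Bool => P (p.1, p.2, true) * (1 - g p) + P (p.1, p.2, false) * g p)
        (x, z) (x', z) (by simp [Prod.ext_iff, hxx'])
        (fun p h1 h2 => by rw [hg'other p h1 h2])]
      simp only [hg'x, hg'x']
      have key : (P (x, z, true) * (1 - (g (x, z) + δ / m)) + P (x, z, false) * (g (x, z) + δ / m)
            - (P (x, z, true) * (1 - g (x, z)) + P (x, z, false) * g (x, z)))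
          + (P (x', z, true) * (1 - (g (x', z) - δ / m')) +
              P (x', z, false) * (g (x', z) - δ / m')
            - (P (x', z, true) * (1 - g (x', z)) + P (x', z, false) * g (x', z)))
          = 2 * δ * (score P x' z - score P x z) := by
        have e1 : δ / m * (P (x, z, false) - P (x, z, true))
            = δ - 2 * δ * score P x z := by
          rw [hscore]
          have hP0 : P (x, z, false) = m - P (x, z, true) := by rw [hmsum]; ring
          rw [hP0]
          field_simp
          ring
        have e2 : δ / m' * (P (x', z, false) - P (x', z, true))
            = δ - 2 * δ * score P x' z := by
          rw [hscore']
          have hP0 : P (x', z, false) = m' - P (x', z, true) := by rw [hmsum']; ring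
          rw [hP0]
          field_simp
          ring
        linear_combination e1 - e2
      have hneg : 2 * δ * (score P x' z - score P x z) < 0 := by
        have := mul_pos hδ (sub_pos.2 hs)
        nlinarith
      linarith [key, hneg]
    exact absurd (hmin hg'K) (not_le.2 hlt)
  -- package the result
  refine ⟨selRate P g true, ⟨?_, ?_⟩, g, hgU, hprefix, ?_, ?_⟩
  · unfold selRate
    apply div_nonneg _ (le_of_lt (hg true))
    apply Finset.sum_nonneg
    intro x _
    exact mul_nonneg (hgU (x, true)).1 (hcell x true)
  · unfold selRate
    rw [div_le_one (hg true)]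
    unfold gMass
    apply Finset.sum_le_sum
    intro x _
    calc g (x, true) * cellMass P x true ≤ 1 * cellMass P x true :=
          mul_le_mul_of_nonneg_right (hgU (x, true)).2 (hcell x true)
      _ = cellMass P x true := one_mul _
  · intro z
    cases z
    · exact hgDP.symm
    · rfl
  · intro g2 h1 h2
    exact hmin ((hKmem g2).2 ⟨h1, h2⟩)
end

section
/- For each r ∈ (0,1], there is a unique group-wise mass-threshold classifier T̃_{t_A,t_D} such that the false positive rate on group A and on group D both equal r. -/
open Finset

/-!
Within group `z` the false positive rate of `f` is `∑ₓ f(x,z) P(x,z,0)` divided by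
`Pr[Y = 0, Z = z]`, so both groups can be treated separately.

Existence: if the slope `c` exceeds the inverse of every gap between scores, the soft threshold
`x ↦ clamp₀₁ (c (s x - t))` is a threshold classifier for every `t`, and its weighted mass is
continuous in `t`, going from the full mass to `0`; the intermediate value theorem gives the
required `t`.

Uniqueness: since scores of positive-mass cells are distinct, two threshold classifiers are
comparable (one dominates the other) on such cells, so equal weighted sums force equality on
the cells with `P(x,z,0) > 0`. The remaining positive-mass cells have score `1`, above every
other cell, and as `r > 0` both classifiers accept them fully.
-/

section Threshold

variable {X : Type*}

def IsThresholdOn (S : Set X) (s f : X → ℝ) : Prop :=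
  ∀ x ∈ S, ∀ x' ∈ S, s x' < s x → 0 < f x' → f x = 1

theorem exists_pos_mul_gap_ge_one [Finite X] (s : X → ℝ) :
    ∃ c > 0, ∀ x x', s x' < s x → 1 ≤ c * (s x - s x') := by
  cases isEmpty_or_nonempty {p : X × X // s p.2 < s p.1} with
  | inl h => exact ⟨1, one_pos, fun x x' hlt ↦ (h.false ⟨(x, x'), hlt⟩).elim⟩
  | inr h =>
    obtain ⟨p, hp⟩ :=
      Finite.exists_min fun p : {p : X × X // s p.2 < s p.1} ↦ s p.1.1 - s p.1.2
    have hδ : 0 < s p.1.1 - s p.1.2 := sub_pos.2 p.2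
    refine ⟨(s p.1.1 - s p.1.2)⁻¹, inv_pos.2 hδ, fun x x' hlt ↦ ?_⟩
    rw [inv_mul_eq_div, one_le_div hδ]
    exact hp ⟨(x, x'), hlt⟩

noncomputable def softThreshold (c t : ℝ) (s : X → ℝ) (x : X) : ℝ :=
  Set.projIcc 0 1 zero_le_one (c * (s x - t))

theorem softThreshold_mem_Icc (c t : ℝ) (s : X → ℝ) (x : X) :
    softThreshold c t s x ∈ Set.Icc 0 1 :=
  (Set.projIcc 0 1 zero_le_one _).2

theorem continuous_softThreshold (c : ℝ) (s : X → ℝ) (x : X) :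
    Continuous fun t ↦ softThreshold c t s x :=
  continuous_subtype_val.comp (continuous_projIcc.comp (by fun_prop))

theorem isThresholdOn_softThreshold {c : ℝ} {s : X → ℝ}
    (hgap : ∀ x x', s x' < s x → 1 ≤ c * (s x - s x')) (t : ℝ) :
    IsThresholdOn Set.univ s (softThreshold c t s) := by
  intro x _ x' _ hlt hpos
  have hx' : 0 < c * (s x' - t) := by
    by_contra! h
    simp [softThreshold, Set.projIcc_of_le_left _ h] at hpos
  have hx : 1 ≤ c * (s x - t) := by linarith [hgap x x' hlt]
  simp [softThreshold, Set.projIcc_of_right_le _ hx]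

theorem exists_isThresholdOn_sum_mul_eq [Fintype X] (s w : X → ℝ) {m : ℝ}
    (hm : m ∈ Set.Icc 0 (∑ x, w x)) :
    ∃ f : X → ℝ, (∀ x, f x ∈ Set.Icc 0 1) ∧ IsThresholdOn Set.univ s f ∧
      ∑ x, f x * w x = m := by
  obtain ⟨c, hc, hgap⟩ := exists_pos_mul_gap_ge_one s
  obtain ⟨L, hL⟩ := (Set.finite_range s).bddBelow
  obtain ⟨U, hU⟩ := (Set.finite_range s).bddAbove
  have hcont : Continuous fun t ↦ ∑ x, softThreshold c t s x * w x :=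
    continuous_finsetSum _ fun x _ ↦ (continuous_softThreshold c s x).mul continuous_const
  have hU0 : ∑ x, softThreshold c U s x * w x = 0 := Finset.sum_eq_zero fun x _ ↦ by
    have : c * (s x - U) ≤ 0 :=
      mul_nonpos_of_nonneg_of_nonpos hc.le (sub_nonpos.2 (hU ⟨x, rfl⟩))
    simp [softThreshold, Set.projIcc_of_le_left _ this]
  have hL1 : ∑ x, softThreshold c (L - c⁻¹) s x * w x = ∑ x, w x :=
    Finset.sum_congr rfl fun x _ ↦ by
      have : 1 ≤ c * (s x - (L - c⁻¹)) := by
        rw [mul_sub, mul_sub, mul_inv_cancel₀ hc.ne']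
        nlinarith [hL ⟨x, rfl⟩]
      simp [softThreshold, Set.projIcc_of_right_le _ this]
  obtain ⟨t, ht⟩ := intermediate_value_univ U (L - c⁻¹) hcont (by rwa [hU0, hL1])
  exact ⟨softThreshold c t s, softThreshold_mem_Icc c t s, isThresholdOn_softThreshold hgap t,
    ht⟩

variable {S : Set X} {s w f g : X → ℝ}

theorem IsThresholdOn.mono {T : Set X} (h : IsThresholdOn S s f) (hTS : T ⊆ S) :
    IsThresholdOn T s f :=
  fun x hx x' hx' ↦ h x (hTS hx) x' (hTS hx')

theorem IsThresholdOn.le_or_le (hs : Set.InjOn s S) (hf : ∀ x, f x ∈ Set.Icc 0 1)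
    (hg : ∀ x, g x ∈ Set.Icc 0 1) (hfS : IsThresholdOn S s f) (hgS : IsThresholdOn S s g) :
    (∀ x ∈ S, f x ≤ g x) ∨ ∀ x ∈ S, g x ≤ f x := by
  by_contra! h
  obtain ⟨⟨a, ha, hga⟩, b, hb, hfb⟩ := h
  rcases lt_trichotomy (s a) (s b) with hab | hab | hab
  · linarith [hfS b hb a ha hab ((hg a).1.trans_lt hga), (hg b).2]
  · obtain rfl := hs ha hb hab
    linarith
  · linarith [hgS a ha b hb hab ((hf b).1.trans_lt hfb), (hf a).2]

theorem eq_of_le_of_sum_mul_eq [Fintype X] (hw : 0 ≤ w) (hle : ∀ x, 0 < w x → f x ≤ g x)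
    (hsum : ∑ x, f x * w x = ∑ x, g x * w x) : ∀ x, 0 < w x → f x = g x := by
  have hle' : ∀ x ∈ Finset.univ, f x * w x ≤ g x * w x := fun x _ ↦ by
    rcases (hw x).eq_or_lt with h | h
    · simp [← h]
    · exact mul_le_mul_of_nonneg_right (hle x h) h.le
  exact fun x hx ↦
    mul_right_cancel₀ hx.ne' ((Finset.sum_eq_sum_iff_of_le hle').1 hsum x (Finset.mem_univ x))

theorem IsThresholdOn.eq_of_sum_mul_eq [Fintype X] (hw : 0 ≤ w) (hs : Set.InjOn s {x | 0 < w x})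
    (hf : ∀ x, f x ∈ Set.Icc 0 1) (hg : ∀ x, g x ∈ Set.Icc 0 1)
    (hfS : IsThresholdOn {x | 0 < w x} s f) (hgS : IsThresholdOn {x | 0 < w x} s g)
    (hsum : ∑ x, f x * w x = ∑ x, g x * w x) : ∀ x, 0 < w x → f x = g x := by
  rcases hfS.le_or_le hs hf hg hgS with h | h
  · exact eq_of_le_of_sum_mul_eq hw h hsum
  · exact fun x hx ↦ (eq_of_le_of_sum_mul_eq hw h hsum.symm x hx).symm

theorem IsThresholdOn.eq_one_of_sum_mul_pos [Fintype X] (h : IsThresholdOn S s f) (hw : 0 ≤ w)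
    (hwS : ∀ x, 0 < w x → x ∈ S) {x : X} (hx : x ∈ S)
    (hsx : ∀ x', 0 < w x' → s x' < s x)
    (hpos : 0 < ∑ x, f x * w x) : f x = 1 := by
  obtain ⟨x', -, hx'⟩ :=
    Finset.exists_lt_of_sum_lt (f := fun _ ↦ (0 : ℝ)) (s := Finset.univ) (by simpa using hpos)
  have hw' : 0 < w x' := (hw x').lt_of_ne fun h ↦ by simp [← h] at hx'
  exact h x hx x' (hwS x' hw') (hsx x' hw') (pos_of_mul_pos_left hx' hw'.le)

end Threshold

section Group

variable {X : Type*} {P : X × Bool × Bool → ℝ} {x : X} {z : Bool}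

theorem cellMass_pos (hP : ∀ p, 0 ≤ P p) (h : 0 < P (x, z, false)) : 0 < cellMass P x z := by
  unfold cellMass
  linarith [hP (x, z, true)]

theorem score_lt_one (hP : ∀ p, 0 ≤ P p) (h : 0 < P (x, z, false)) : score P x z < 1 := by
  rw [score, div_lt_one (cellMass_pos hP h), cellMass]
  linarith

theorem score_eq_one (hx : 0 < cellMass P x z) (h : P (x, z, false) = 0) : score P x z = 1 := by
  rw [score, div_eq_one_iff_eq hx.ne', cellMass, h, zero_add]

theorem MergedScores.injOn (hm : MergedScores P) (z : Bool) :
    Set.InjOn (score P · z) {x | 0 < cellMass P x z} :=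
  fun x hx x' hx' h ↦ hm z x x' hx hx' h

theorem IsPrefix.isThresholdOn {f : X × Bool → ℝ} (h : IsPrefix P f) (z : Bool) :
    IsThresholdOn {x | 0 < cellMass P x z} (score P · z) (fun x ↦ f (x, z)) :=
  fun x hx x' hx' ↦ h z x x' hx hx'

theorem fpr_eq_iff [Fintype X] {f : X × Bool → ℝ} {r : ℝ} (h0 : 0 < ∑ x, P (x, z, false)) :
    fpr P f z = r ↔ ∑ x, f (x, z) * P (x, z, false) = r * ∑ x, P (x, z, false) :=
  div_eq_iff h0.ne'

theorem IsPrefix.eq_of_sum_mul_eq [Fintype X] (hP : ∀ p, 0 ≤ P p) (hm : MergedScores P)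
    {f g : X × Bool → ℝ} (hf : InUnit f) (hg : InUnit g)
    (hfP : IsPrefix P f) (hgP : IsPrefix P g)
    (hsum : ∑ x, f (x, z) * P (x, z, false) = ∑ x, g (x, z) * P (x, z, false))
    (hpos : 0 < ∑ x, f (x, z) * P (x, z, false)) (hx : 0 < cellMass P x z) :
    f (x, z) = g (x, z) := by
  have hw : 0 ≤ fun x ↦ P (x, z, false) := fun x ↦ hP _
  have hwS : ∀ x, 0 < P (x, z, false) → 0 < cellMass P x z := fun x ↦ cellMass_pos hP
  rcases (hP (x, z, false)).eq_or_lt with hx0 | hx0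
  · have hsx : ∀ x', 0 < P (x', z, false) → score P x' z < score P x z := fun x' h' ↦ by
      rw [score_eq_one hx hx0.symm]
      exact score_lt_one hP h'
    rw [(hfP.isThresholdOn z).eq_one_of_sum_mul_pos hw hwS hx hsx hpos,
      (hgP.isThresholdOn z).eq_one_of_sum_mul_pos hw hwS hx hsx (hsum ▸ hpos)]
  · exact IsThresholdOn.eq_of_sum_mul_eq hw ((hm.injOn z).mono hwS) (fun x ↦ hf (x, z))
      (fun x ↦ hg (x, z)) ((hfP.isThresholdOn z).mono hwS) ((hgP.isThresholdOn z).mono hwS)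
      hsum x hx0

end Group

/-- For each `r ∈ (0,1]` there is a unique group-wise mass-threshold classifier whose
false positive rate equals `r` on both groups. -/
theorem stmt10 {X : Type*} [Fintype X] (P : X × Bool × Bool → ℝ) (hP : IsDist P)
    (hm : MergedScores P) (h0 : ∀ z, 0 < ∑ x, P (x, z, false))
    (r : ℝ) (hr : r ∈ Set.Ioc (0 : ℝ) 1) :
    (∃ f : X × Bool → ℝ, InUnit f ∧ IsPrefix P f ∧ ∀ z, fpr P f z = r) ∧
    ∀ f g : X × Bool → ℝ,
      (InUnit f ∧ IsPrefix P f ∧ ∀ z, fpr P f z = r) →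
      (InUnit g ∧ IsPrefix P g ∧ ∀ z, fpr P g z = r) →
      ∀ x z, 0 < cellMass P x z → f (x, z) = g (x, z) := by
  refine ⟨?_, fun f g ⟨hfU, hfP, hfr⟩ ⟨hgU, hgP, hgr⟩ x z hx ↦ ?_⟩
  · have hmass : ∀ z, r * ∑ x, P (x, z, false) ∈ Set.Icc 0 (∑ x, P (x, z, false)) :=
      fun z ↦ ⟨mul_nonneg hr.1.le (h0 z).le, mul_le_of_le_one_left (h0 z).le hr.2⟩
    choose f hfU hfS hfsum using fun z ↦
      exists_isThresholdOn_sum_mul_eq (score P · z) (fun x ↦ P (x, z, false)) (hmass z)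
    exact ⟨fun p ↦ f p.2 p.1, fun p ↦ hfU p.2 p.1,
      fun z x x' _ _ ↦ hfS z x trivial x' trivial, fun z ↦ (fpr_eq_iff (h0 z)).2 (hfsum z)⟩
  · have hfsum := (fpr_eq_iff (h0 z)).1 (hfr z)
    have hgsum := (fpr_eq_iff (h0 z)).1 (hgr z)
    exact IsPrefix.eq_of_sum_mul_eq hP.1 hm hfU hgU hfP hgP (hfsum.trans hgsum.symm)
      (hfsum ▸ mul_pos hr.1 (h0 z)) hx
end

section
/- For two randomized classifiers f and g on a single group whose accepted mass satisfies: g accepts the top-mass prefix (by decreasing score) and f accepts the same total false-positive mass but not the top prefix, the score of g's accepted set strictly exceeds the score of f's accepted set, and consequently g's accepted probability mass strictly exceeds f's. -/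
/-!
Let `θ` be the lowest score that `g` accepts with positive mass. Since `g` is a prefix, the
difference `d = (g - f) P` of the accepted masses is `≥ 0` above `θ` and `≤ 0` below it, so
`(S - θ) d ≥ 0` pointwise. Equal false-positive mass means `∑ d (1 - S) = 0`, which turns
`∑ (S - θ) d` into `(1 - θ) ∑ d S`; hence `g` has at least as much true-positive mass as `f`,
strictly because scores are distinct on the support and `f ≠ g` there. With the false-positive
mass fixed and positive, both the score `TP / (TP + FP)` and the mass `TP + FP` increase with `TP`.
-/

open Finset

lemma div_add_lt_div_add {K : Type*} [Field K] [LinearOrder K] [IsStrictOrderedRing K]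
    {a b c : K} (ha : 0 ≤ a) (hab : a < b) (hc : 0 < c) : a / (a + c) < b / (b + c) := by
  rw [div_lt_div_iff₀ (by linarith) (by linarith)]
  nlinarith

lemma sub_mul_sub_mul_nonneg_of_threshold {s θ p u v : ℝ} (hp : 0 ≤ p) (hu : u ∈ Set.Icc 0 1)
    (hbelow : 0 < p → s < θ → v = 0) (habove : 0 < p → θ < s → v = 1) :
    0 ≤ (s - θ) * ((v - u) * p) := by
  rcases hp.eq_or_lt with rfl | hp
  · simp
  rcases lt_trichotomy s θ with h | rfl | h
  · rw [hbelow hp h]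
    exact mul_nonneg_of_nonpos_of_nonpos (by linarith) (by nlinarith [hu.1])
  · simp
  · rw [habove hp h]
    exact mul_nonneg (by linarith) (by nlinarith [hu.2])

section Exchange

variable {X : Type*} [Fintype X]

lemma sum_sub_mul_eq_of_sum_mul_one_sub_eq_zero (S d : X → ℝ) (θ : ℝ)
    (hbal : ∑ x, d x * (1 - S x) = 0) :
    ∑ x, (S x - θ) * d x = (1 - θ) * ∑ x, d x * S x := by
  have hsum : ∑ x, d x = ∑ x, d x * S x := by
    rw [← sub_eq_zero, ← hbal, ← sum_sub_distrib]
    exact sum_congr rfl fun x _ => by ring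
  simp only [sub_mul, sum_sub_distrib, ← mul_sum, hsum]
  simp only [mul_comm (S _)]
  ring

lemma sum_mul_pos_of_balanced {S d : X → ℝ} {θ : ℝ} (hθ : θ < 1)
    (hsign : ∀ x, 0 ≤ (S x - θ) * d x) (hbal : ∑ x, d x * (1 - S x) = 0)
    (hinj : ∀ x y, d x ≠ 0 → d y ≠ 0 → S x = S y → x = y) (hne : ∃ x, d x ≠ 0) :
    0 < ∑ x, d x * S x := by
  suffices h : 0 < ∑ x, (S x - θ) * d x by
    rw [sum_sub_mul_eq_of_sum_mul_one_sub_eq_zero S d θ hbal] at h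
    exact pos_of_mul_pos_right h (by linarith)
  refine (sum_nonneg fun x _ => hsign x).lt_of_ne fun h0 => ?_
  have hlevel : ∀ x, d x ≠ 0 → S x = θ := fun x hx => by
    have := (sum_eq_zero_iff_of_nonneg fun x _ => hsign x).mp h0.symm x (mem_univ x)
    rcases mul_eq_zero.mp this with h | h
    · linarith
    · exact absurd h hx
  obtain ⟨x₀, hx₀⟩ := hne
  have hsingle : ∑ x, d x * (1 - S x) = d x₀ * (1 - S x₀) := by
    refine sum_eq_single x₀ (fun y _ hy => ?_) (fun h => absurd (mem_univ x₀) h)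
    by_cases hdy : d y = 0
    · rw [hdy, zero_mul]
    · exact absurd (hinj y x₀ hdy hx₀ ((hlevel y hdy).trans (hlevel x₀ hx₀).symm)) hy
  rw [hsingle, hlevel x₀ hx₀] at hbal
  exact mul_ne_zero hx₀ (by linarith) hbal

variable {P S g : X → ℝ}

lemma exists_threshold_of_prefix (hg : ∀ x, 0 ≤ g x)
    (hprefix : ∀ x x', 0 < P x → 0 < P x' → S x' < S x → 0 < g x' → g x = 1)
    {x₁ : X} (hPx₁ : 0 < P x₁) (hgx₁ : 0 < g x₁) :
    ∃ θ ≤ S x₁, ∀ x, 0 < P x → (S x < θ → g x = 0) ∧ (θ < S x → g x = 1) := by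
  set T := univ.filter fun x => 0 < P x ∧ 0 < g x
  obtain ⟨x₀, hx₀T, hmin⟩ := T.exists_min_image S ⟨x₁, by simp [T, hPx₁, hgx₁]⟩
  obtain ⟨hPx₀, hgx₀⟩ := (mem_filter.mp hx₀T).2
  refine ⟨S x₀, hmin x₁ (by simp [T, hPx₁, hgx₁]), fun x hPx => ⟨fun hlt => ?_, fun hgt =>
    hprefix x x₀ hPx hPx₀ hgt hgx₀⟩⟩
  by_contra hgx
  have hxT : x ∈ T := by simp [T, hPx, lt_of_le_of_ne (hg x) (Ne.symm hgx)]
  exact absurd (hmin x hxT) (not_le.mpr hlt)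

lemma sum_mul_eq_sum_mul_add_sum_mul_one_sub (h : X → ℝ) :
    ∑ x, h x * P x = ∑ x, h x * P x * S x + ∑ x, h x * P x * (1 - S x) := by
  rw [← sum_add_distrib]
  exact sum_congr rfl fun x _ => by ring

end Exchange

/-- Single-group exchange lemma: if `g` accepts a top-mass prefix (by decreasing score),
`f` has the same (positive) false-positive mass as `g` but differs from `g` on a
positive-mass point, then the score of `g`'s accepted fractional set strictly exceeds
that of `f`'s, and consequently `g`'s accepted mass strictly exceeds `f`'s. -/
theorem stmt12 {X : Type*} [Fintype X] (P S : X → ℝ)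
    (hP : ∀ x, 0 ≤ P x) (hS : ∀ x, S x ∈ Set.Icc (0 : ℝ) 1)
    (hdistinct : ∀ x x', 0 < P x → 0 < P x' → S x = S x' → x = x')
    (f g : X → ℝ)
    (hf : ∀ x, f x ∈ Set.Icc (0 : ℝ) 1) (hg : ∀ x, g x ∈ Set.Icc (0 : ℝ) 1)
    (hprefix : ∀ x x', 0 < P x → 0 < P x' → S x' < S x → 0 < g x' → g x = 1)
    (hfp : ∑ x, f x * P x * (1 - S x) = ∑ x, g x * P x * (1 - S x))
    (hfppos : 0 < ∑ x, g x * P x * (1 - S x))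
    (hne : ∃ x, 0 < P x ∧ f x ≠ g x) :
    (∑ x, f x * P x * S x) / (∑ x, f x * P x) <
      (∑ x, g x * P x * S x) / (∑ x, g x * P x) ∧
    (∑ x, f x * P x) < (∑ x, g x * P x) := by
  obtain ⟨x₁, -, hx₁⟩ := exists_lt_of_sum_lt (s := univ) (f := fun _ => (0 : ℝ)) (by simpa)
  have hgP : 0 < g x₁ * P x₁ := pos_of_mul_pos_left hx₁ (sub_nonneg.mpr (hS x₁).2)
  have hSx₁ : S x₁ < 1 := sub_pos.mp (pos_of_mul_pos_right hx₁ hgP.le)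
  have hgx₁ : 0 < g x₁ := pos_of_mul_pos_left hgP (hP x₁)
  have hPx₁ : 0 < P x₁ := pos_of_mul_pos_right hgP (hg x₁).1
  obtain ⟨θ, hθ, hthreshold⟩ := exists_threshold_of_prefix (fun x => (hg x).1) hprefix hPx₁ hgx₁
  have hP_pos_of_ne : ∀ x, (g x - f x) * P x ≠ 0 → 0 < P x := fun x hx =>
    (hP x).lt_of_ne fun h => hx (by rw [← h, mul_zero])
  have htp : ∑ x, f x * P x * S x < ∑ x, g x * P x * S x := by
    have := sum_mul_pos_of_balanced (S := S) (d := fun x => (g x - f x) * P x) (hθ.trans_lt hSx₁)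
      (fun x => sub_mul_sub_mul_nonneg_of_threshold (hP x) (hf x)
        (fun hPx => (hthreshold x hPx).1) (fun hPx => (hthreshold x hPx).2))
      (by simp only [sub_mul, sum_sub_distrib, hfp, sub_self])
      (fun x y hx hy => hdistinct x y (hP_pos_of_ne x hx) (hP_pos_of_ne y hy))
      (hne.imp fun x hx => mul_ne_zero (sub_ne_zero.mpr hx.2.symm) hx.1.ne')
    simpa only [sub_mul, sum_sub_distrib, sub_pos] using this
  rw [sum_mul_eq_sum_mul_add_sum_mul_one_sub (S := S) f,
    sum_mul_eq_sum_mul_add_sum_mul_one_sub (S := S) g, hfp]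
  exact ⟨div_add_lt_div_add (sum_nonneg fun x _ =>
    mul_nonneg (mul_nonneg (hf x).1 (hP x)) (hS x).1) htp hfppos, by linarith⟩
end

section
/- The function r ↦ L(f_r), where f_r is the group-wise mass-threshold classifier with false positive rate r on both groups, is continuous, piecewise linear, and convex on [0,1]. -/
open Finset

open scoped Classical

set_option linter.unusedSectionVars false

/-! ### Auxiliary development -/

-- telescoping lemma
lemma tele {X K : Type*} [LinearOrder K] (k : X → K) (w : X → ℝ) (H : ℝ → ℝ)
    (s : Finset X) (hk : Set.InjOn k s) :
    ∑ x ∈ s, (H ((∑ x' ∈ s.filter (fun x' => k x' < k x), w x') + w x)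
      - H (∑ x' ∈ s.filter (fun x' => k x' < k x), w x'))
      = H (∑ x ∈ s, w x) - H 0 := by
  induction s using Finset.strongInduction with
  | _ s ih =>
    rcases s.eq_empty_or_nonempty with rfl | hs
    · simp
    · obtain ⟨m, hm, hmax⟩ := s.exists_max_image k hs
      have hms : s.erase m ⊂ s := Finset.erase_ssubset hm
      have hfilt : ∀ x ∈ s.erase m,
          s.filter (fun x' => k x' < k x) = (s.erase m).filter (fun x' => k x' < k x) := by
        intro x hx
        apply Finset.ext
        intro y
        simp only [Finset.mem_filter, Finset.mem_erase]
        constructor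
        · rintro ⟨hy, hlt⟩
          refine ⟨⟨?_, hy⟩, hlt⟩
          rintro rfl
          exact absurd (hlt.trans_le (hmax _ (Finset.mem_of_mem_erase hx))) (lt_irrefl _)
        · rintro ⟨⟨_, hy⟩, hlt⟩; exact ⟨hy, hlt⟩
      have hfm : s.filter (fun x' => k x' < k m) = s.erase m := by
        apply Finset.ext
        intro y
        simp only [Finset.mem_filter, Finset.mem_erase]
        constructor
        · rintro ⟨hy, hlt⟩; exact ⟨fun h => absurd (h ▸ hlt) (lt_irrefl _), hy⟩
        · rintro ⟨hne, hy⟩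
          refine ⟨hy, lt_of_le_of_ne (hmax _ hy) ?_⟩
          intro he; exact hne (hk hy hm he)
      rw [← Finset.sum_erase_add s _ hm, ← Finset.sum_erase_add s w hm]
      rw [Finset.sum_congr rfl (fun x hx => by rw [hfilt x hx])]
      rw [ih _ hms (hk.mono (Finset.erase_subset m s)), hfm]
      ring

section Aux
variable {X : Type*} [Fintype X]

noncomputable def key (P : X × Bool × Bool → ℝ) (z : Bool) (x : X) : ℝ ×ₗ ℕ :=
  toLex (-(score P x z), (Fintype.equivFin X x : ℕ))

lemma key_inj (P : X × Bool × Bool → ℝ) (z : Bool) : Function.Injective (key P z) := by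
  intro x y h
  have h' : (-(score P x z), ((Fintype.equivFin X) x : ℕ))
      = (-(score P y z), ((Fintype.equivFin X) y : ℕ)) := toLex.injective h
  exact (Fintype.equivFin X).injective (Fin.val_injective (congrArg Prod.snd h'))

lemma key_lt_of_score_lt (P : X × Bool × Bool → ℝ) (z : Bool) {x x' : X}
    (h : score P x' z < score P x z) : key P z x < key P z x' := by
  apply Prod.Lex.left
  simpa using h

lemma score_le_of_key_le (P : X × Bool × Bool → ℝ) (z : Bool) {x x' : X}
    (h : key P z x ≤ key P z x') : score P x' z ≤ score P x z := by
  rcases Prod.Lex.le_iff.mp h with h | ⟨h, _⟩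
  · simpa [key] using h.le
  · simpa [key] using h.le

noncomputable def aa (P : X × Bool × Bool → ℝ) (z : Bool) (x : X) : ℝ :=
  ∑ x' ∈ univ.filter (fun x' => key P z x' < key P z x), P (x', z, false)

noncomputable def NN (P : X × Bool × Bool → ℝ) (z : Bool) : ℝ := ∑ x, P (x, z, false)

noncomputable def cc (P : X × Bool × Bool → ℝ) (z : Bool) (x : X) : ℝ :=
  (P (x, z, false) - P (x, z, true)) / P (x, z, false)

noncomputable def ff (P : X × Bool × Bool → ℝ) (r : ℝ) : X × Bool → ℝ := fun p =>
  if 0 < P (p.1, p.2, false) then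
    max 0 (min 1 ((r * NN P p.2 - aa P p.2 p.1) / P (p.1, p.2, false)))
  else if 0 < cellMass P p.1 p.2 then 1 else 0

variable {P : X × Bool × Bool → ℝ} (hP0 : ∀ p, 0 ≤ P p)

include hP0

lemma aa_nonneg (z : Bool) (x : X) : 0 ≤ aa P z x :=
  Finset.sum_nonneg fun _ _ => hP0 _

lemma aa_add_le (z : Bool) {x x' : X} (h : key P z x < key P z x') :
    aa P z x + P (x, z, false) ≤ aa P z x' := by
  have hx : x ∉ univ.filter (fun x'' => key P z x'' < key P z x) := by simp
  have heq : aa P z x + P (x, z, false)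
      = ∑ x'' ∈ insert x (univ.filter (fun x'' => key P z x'' < key P z x)), P (x'', z, false) := by
    rw [Finset.sum_insert hx, aa]; ring
  rw [heq]
  apply Finset.sum_le_sum_of_subset_of_nonneg
  · intro y hy
    simp only [Finset.mem_insert, Finset.mem_filter, Finset.mem_univ, true_and] at hy ⊢
    rcases hy with rfl | hy
    · exact h
    · exact hy.trans h
  · intro y _ _; exact hP0 _

lemma bb_le_NN (z : Bool) (x : X) : aa P z x + P (x, z, false) ≤ NN P z := by
  have hx : x ∉ univ.filter (fun x'' => key P z x'' < key P z x) := by simp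
  have heq : aa P z x + P (x, z, false)
      = ∑ x'' ∈ insert x (univ.filter (fun x'' => key P z x'' < key P z x)), P (x'', z, false) := by
    rw [Finset.sum_insert hx, aa]; ring
  rw [heq, NN]
  apply Finset.sum_le_sum_of_subset_of_nonneg
  · intro y _; exact Finset.mem_univ y
  · intro y _ _; exact hP0 _

omit hP0

-- clamp identity
lemma clamp_mul_s13 {t a w : ℝ} (hw : 0 < w) :
    max 0 (min 1 ((t - a) / w)) * w = min t (a + w) - min t a := by
  rcases le_total t a with h | h
  · have h1 : (t - a) / w ≤ 0 := div_nonpos_of_nonpos_of_nonneg (by linarith) hw.le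
    have h2 : min 1 ((t - a) / w) ≤ 0 := le_trans (min_le_right _ _) h1
    rw [max_eq_left h2, min_eq_left (by linarith), min_eq_left h]
    ring
  · rcases le_total t (a + w) with h2 | h2
    · have h1 : (t - a) / w ≤ 1 := by rw [div_le_one hw]; linarith
      have h0 : 0 ≤ (t - a) / w := div_nonneg (by linarith) hw.le
      rw [min_eq_right h1, max_eq_right h0, min_eq_left h2, min_eq_right h,
        div_mul_cancel₀ _ hw.ne']
    · have h1 : (1 : ℝ) ≤ (t - a) / w := by rw [le_div_iff₀ hw]; linarith
      rw [min_eq_left h1, max_eq_right zero_le_one, min_eq_right h2, min_eq_right h]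
      ring

include hP0

lemma score_le_one {x : X} {z : Bool} (h : 0 < cellMass P x z) : score P x z ≤ 1 := by
  rw [score, div_le_one h]
  have := hP0 (x, z, false)
  rw [cellMass]; linarith

lemma pfalse_eq_zero_of_score_one {x : X} {z : Bool} (h : 0 < cellMass P x z)
    (hs : score P x z = 1) : P (x, z, false) = 0 := by
  rw [score, div_eq_one_iff_eq h.ne'] at hs
  have : cellMass P x z = P (x, z, false) + P (x, z, true) := rfl
  linarith [hs, this ▸ hs]

lemma score_one_of_pfalse_eq_zero {x : X} {z : Bool} (h : 0 < cellMass P x z)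
    (hw : ¬ 0 < P (x, z, false)) : score P x z = 1 := by
  have hw0 : P (x, z, false) = 0 := le_antisymm (not_lt.mp hw) (hP0 _)
  have hc : cellMass P x z = P (x, z, true) := by rw [cellMass, hw0, zero_add]
  rw [score, hc, div_self]
  rw [hc] at h
  exact h.ne'

-- per-cell fpr identity (for all cells)
lemma ff_mul_w (r : ℝ) (z : Bool) (x : X) :
    ff P r (x, z) * P (x, z, false)
      = min (r * NN P z) (aa P z x + P (x, z, false)) - min (r * NN P z) (aa P z x) := by
  by_cases hw : 0 < P (x, z, false)
  · rw [ff]; simp only [hw, if_true]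
    exact clamp_mul_s13 hw
  · have hw0 : P (x, z, false) = 0 := le_antisymm (not_lt.mp hw) (hP0 _)
    rw [hw0, add_zero, mul_zero, sub_self]

lemma sum_ff_mul (r : ℝ) (z : Bool) :
    ∑ x, ff P r (x, z) * P (x, z, false) = min (r * NN P z) (NN P z) - min (r * NN P z) 0 := by
  rw [Finset.sum_congr rfl (fun x _ => ff_mul_w hP0 r z x)]
  have h := tele (key P z) (fun x => P (x, z, false)) (min (r * NN P z)) univ
    (fun a _ b _ h => key_inj P z h)
  simpa [aa, NN] using h

lemma fpr_ff (hN : ∀ z, 0 < ∑ x, P (x, z, false)) {r : ℝ} (hr : r ∈ Set.Icc (0:ℝ) 1) (z : Bool) :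
    fpr P (ff P r) z = r := by
  have hN' : (0:ℝ) < NN P z := hN z
  have h1 : r * NN P z ≤ NN P z := by nlinarith [hr.1, hr.2]
  have h2 : (0:ℝ) ≤ r * NN P z := mul_nonneg hr.1 hN'.le
  rw [fpr, sum_ff_mul hP0 r z, min_eq_left h1, min_eq_right h2, sub_zero]
  have : (∑ x, P (x, z, false)) = NN P z := rfl
  rw [this, mul_div_assoc, div_self hN'.ne', mul_one]

end Aux

section Aux3
variable {X : Type*} [Fintype X]
variable {P : X × Bool × Bool → ℝ} (hP0 : ∀ p, 0 ≤ P p)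

lemma inUnit_ff (r : ℝ) : InUnit (ff P r) := by
  rintro ⟨x, z⟩
  rw [ff]
  by_cases hw : 0 < P (x, z, false)
  · simp only [hw, if_true]
    constructor
    · exact le_max_left _ _
    · exact max_le zero_le_one (min_le_left _ _)
  · simp only [hw, if_false]
    by_cases hc : 0 < cellMass P x z <;> simp [hc]

include hP0

lemma ff_score_one {r : ℝ} : ∀ x z, 0 < cellMass P x z → score P x z = 1 → ff P r (x, z) = 1 := by
  intro x z hc hs
  have hw0 : P (x, z, false) = 0 := pfalse_eq_zero_of_score_one hP0 hc hs
  rw [ff]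
  simp only [hw0, lt_irrefl, if_false, hc, if_true]

lemma isPrefix_ff {r : ℝ} : IsPrefix P (ff P r) := by
  intro z x x' hcx hcx' hlt hpos
  by_cases hw : 0 < P (x, z, false)
  swap
  · rw [ff]; simp only [hw, if_false, hcx, if_true]
  -- x' must have positive Pfalse
  by_cases hw' : 0 < P (x', z, false)
  swap
  · have h1 : score P x' z = 1 := score_one_of_pfalse_eq_zero hP0 hcx' hw'
    have h2 : score P x z ≤ 1 := score_le_one hP0 hcx
    rw [h1] at hlt
    linarith
  -- from ff x' > 0, threshold exceeds aa x'
  have hkey : key P z x < key P z x' := key_lt_of_score_lt P z hlt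
  have hle : aa P z x + P (x, z, false) ≤ aa P z x' := aa_add_le hP0 z hkey
  have hx' : 0 < max 0 (min 1 ((r * NN P z - aa P z x') / P (x', z, false))) := by
    rw [ff] at hpos; simpa only [hw', if_true] using hpos
  have ht : aa P z x' < r * NN P z := by
    by_contra hcon
    push_neg at hcon
    have : (r * NN P z - aa P z x') / P (x', z, false) ≤ 0 :=
      div_nonpos_of_nonpos_of_nonneg (by linarith) hw'.le
    have : max 0 (min 1 ((r * NN P z - aa P z x') / P (x', z, false))) ≤ 0 :=
      max_le le_rfl (le_trans (min_le_right _ _) this)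
    linarith
  rw [ff]
  simp only [hw, if_true]
  have h1 : (1:ℝ) ≤ (r * NN P z - aa P z x) / P (x, z, false) := by
    rw [le_div_iff₀ hw]; linarith
  rw [min_eq_left h1, max_eq_right zero_le_one]

-- the explicit loss function
noncomputable def gterm (P : X × Bool × Bool → ℝ) (z : Bool) (x : X) (t : ℝ) : ℝ :=
  if 0 < P (x, z, false) then
    P (x, z, true) + cc P z x * (min t (aa P z x + P (x, z, false)) - min t (aa P z x))
  else 0

noncomputable def Lam (P : X × Bool × Bool → ℝ) [Fintype X] (r : ℝ) : ℝ :=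
  ∑ z, ∑ x, gterm P z x (r * NN P z)

lemma loss_ff (r : ℝ) : loss P (ff P r) = Lam P r := by
  rw [loss, Finset.sum_comm, Lam]
  refine Finset.sum_congr rfl fun z _ => Finset.sum_congr rfl fun x _ => ?_
  by_cases hw : 0 < P (x, z, false)
  · rw [gterm]
    simp only [hw, if_true]
    have hfw := ff_mul_w hP0 r z x
    have hfval : ff P r (x, z) * P (x, z, false) * cc P z x
        = (min (r * NN P z) (aa P z x + P (x, z, false)) - min (r * NN P z) (aa P z x))
          * cc P z x := by rw [hfw]
    rw [cc] at hfval ⊢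
    have hexp : ff P r (x, z) * P (x, z, false)
        * ((P (x, z, false) - P (x, z, true)) / P (x, z, false))
        = ff P r (x, z) * (P (x, z, false) - P (x, z, true)) := by
      field_simp
    rw [hexp] at hfval
    linarith [hfval]
  · have hw0 : P (x, z, false) = 0 := le_antisymm (not_lt.mp hw) (hP0 _)
    rw [gterm]
    simp only [hw, if_false]
    by_cases hc : 0 < cellMass P x z
    · have : ff P r (x, z) = 1 := by rw [ff]; simp only [hw, if_false, hc, if_true]
      rw [this, hw0]; ring
    · have hm : P (x, z, false) + P (x, z, true) ≤ 0 := not_lt.mp hc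
      have h1 : P (x, z, true) = 0 := le_antisymm (by linarith [hP0 (x, z, false)]) (hP0 _)
      rw [h1, hw0]; ring

end Aux3

section Aux4
variable {X : Type*} [Fintype X]
variable {P : X × Bool × Bool → ℝ} (hP0 : ∀ p, 0 ≤ P p)

include hP0 in
lemma cc_mono {z : Bool} {x x' : X} (hw : 0 < P (x, z, false)) (hw' : 0 < P (x', z, false))
    (hs : score P x' z ≤ score P x z) : cc P z x ≤ cc P z x' := by
  have hm : 0 < cellMass P x z := by
    have := hP0 (x, z, true); rw [cellMass]; linarith
  have hm' : 0 < cellMass P x' z := by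
    have := hP0 (x', z, true); rw [cellMass]; linarith
  rw [score, score, div_le_div_iff₀ hm' hm] at hs
  rw [cc, cc, div_le_div_iff₀ hw hw']
  have e : cellMass P x z = P (x, z, false) + P (x, z, true) := rfl
  have e' : cellMass P x' z = P (x', z, false) + P (x', z, true) := rfl
  rw [e, e'] at hs
  nlinarith [hs]

include hP0

lemma exists_cover (z : Bool) (hN : 0 < NN P z) {t0 : ℝ} (h0 : 0 ≤ t0) (h1 : t0 ≤ NN P z) :
    ∃ x, 0 < P (x, z, false) ∧ aa P z x ≤ t0 ∧ t0 ≤ aa P z x + P (x, z, false) := by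
  set F : Finset X := univ.filter (fun x => 0 < P (x, z, false)) with hF
  have hFne : F.Nonempty := by
    by_contra hc
    rw [Finset.not_nonempty_iff_eq_empty] at hc
    have : NN P z ≤ 0 := Finset.sum_nonpos fun x _ => by
      by_contra hx
      push_neg at hx
      have : x ∈ F := by simp [hF, hx]
      simp [hc] at this
    linarith
  obtain ⟨xm, hxmF, hxmax⟩ := F.exists_max_image (key P z) hFne
  have hxmw : 0 < P (xm, z, false) := by simpa [hF] using hxmF
  have hbmax : aa P z xm + P (xm, z, false) = NN P z := by
    have hsplit := Finset.sum_filter_add_sum_filter_not univ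
      (fun x' => key P z x' < key P z xm) (fun x' => P (x', z, false))
    have hsingle : ∑ x' ∈ univ.filter (fun x' => ¬ key P z x' < key P z xm),
        P (x', z, false) = P (xm, z, false) := by
      apply Finset.sum_eq_single_of_mem
      · simp
      · intro y hy hne
        by_contra hyw
        have hyw' : 0 < P (y, z, false) :=
          lt_of_le_of_ne (hP0 _) (fun h => hyw h.symm)
        have hyF : y ∈ F := by simp [hF, hyw']
        simp only [Finset.mem_filter, Finset.mem_univ, true_and, not_lt] at hy
        exact hne (key_inj P z (le_antisymm (hxmax _ hyF) hy))
    rw [aa, NN, ← hsplit, hsingle]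
  set S : Finset X := F.filter (fun x => t0 ≤ aa P z x + P (x, z, false)) with hS
  have hSne : S.Nonempty := ⟨xm, by simp [hS, hxmF, hbmax ▸ h1]⟩
  obtain ⟨xs, hxsS, hxmin⟩ := S.exists_min_image (key P z) hSne
  have hxsF : xs ∈ F := (Finset.mem_filter.mp hxsS).1
  have hxsw : 0 < P (xs, z, false) := by simpa [hF] using hxsF
  have hxsb : t0 ≤ aa P z xs + P (xs, z, false) := (Finset.mem_filter.mp hxsS).2
  refine ⟨xs, hxsw, ?_, hxsb⟩
  set T : Finset X := F.filter (fun x => key P z x < key P z xs) with hT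
  rcases T.eq_empty_or_nonempty with hTe | hTne
  · have : aa P z xs = 0 := by
      apply Finset.sum_eq_zero
      intro y hy
      simp only [Finset.mem_filter, Finset.mem_univ, true_and] at hy
      by_contra hyw
      have hyw' : 0 < P (y, z, false) := lt_of_le_of_ne (hP0 _) (fun h => hyw h.symm)
      have : y ∈ T := by simp [hT, hF, hyw', hy]
      simp [hTe] at this
    rw [this]; exact h0
  · obtain ⟨xm', hxm'T, hxm'max⟩ := T.exists_max_image (key P z) hTne
    have hxm'F : xm' ∈ F := (Finset.mem_filter.mp hxm'T).1
    have hxm'w : 0 < P (xm', z, false) := by simpa [hF] using hxm'F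
    have hxm'lt : key P z xm' < key P z xs := (Finset.mem_filter.mp hxm'T).2
    -- aa xs = aa xm' + w xm'
    have hkey : aa P z xs = aa P z xm' + P (xm', z, false) := by
      have hsub : (univ.filter (fun x' => key P z x' < key P z xs)).filter
          (fun x' => key P z x' < key P z xm')
          = univ.filter (fun x' => key P z x' < key P z xm') := by
        apply Finset.ext; intro y
        simp only [Finset.mem_filter, Finset.mem_univ, true_and]
        exact ⟨fun h => h.2, fun h => ⟨h.trans hxm'lt, h⟩⟩
      have hsplit := Finset.sum_filter_add_sum_filter_not
        (univ.filter (fun x' => key P z x' < key P z xs))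
        (fun x' => key P z x' < key P z xm') (fun x' => P (x', z, false))
      have hsingle : ∑ x' ∈ (univ.filter (fun x' => key P z x' < key P z xs)).filter
          (fun x' => ¬ key P z x' < key P z xm'), P (x', z, false) = P (xm', z, false) := by
        apply Finset.sum_eq_single_of_mem
        · simp only [Finset.mem_filter, Finset.mem_univ, true_and]
          exact ⟨hxm'lt, lt_irrefl _⟩
        · intro y hy hne
          simp only [Finset.mem_filter, Finset.mem_univ, true_and, not_lt] at hy
          by_contra hyw
          have hyw' : 0 < P (y, z, false) := lt_of_le_of_ne (hP0 _) (fun h => hyw h.symm)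
          have hyT : y ∈ T := by simp [hT, hF, hyw', hy.1]
          exact hne (key_inj P z (le_antisymm (hxm'max _ hyT) hy.2))
      rw [aa, ← hsplit, hsingle, hsub, aa]
    have hxm'nS : xm' ∉ S := by
      intro hmem
      exact absurd hxm'lt (not_lt.mpr (hxmin _ hmem))
    have : ¬ t0 ≤ aa P z xm' + P (xm', z, false) := by
      intro hc
      exact hxm'nS (by simp [hS, hxm'F, hc])
    rw [hkey]
    linarith

-- sum of deltas
lemma sum_delta (z : Bool) (t : ℝ) :
    ∑ x, (min t (aa P z x + P (x, z, false)) - min t (aa P z x))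
      = min t (NN P z) - min t 0 := by
  have h := tele (key P z) (fun x => P (x, z, false)) (min t) univ
    (fun a _ b _ h => key_inj P z h)
  simpa [aa, NN] using h

lemma group_support (z : Bool) (hN : 0 < NN P z) {t0 : ℝ}
    (ht0 : t0 ∈ Set.Icc (0:ℝ) (NN P z)) :
    ∃ m, ∀ t ∈ Set.Icc (0:ℝ) (NN P z),
      (∑ x, gterm P z x t0) + m * (t - t0) ≤ ∑ x, gterm P z x t := by
  obtain ⟨xs, hw, hal, hbu⟩ := exists_cover hP0 z hN ht0.1 ht0.2
  refine ⟨cc P z xs, fun t ht => ?_⟩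
  have hsum : ∀ u ∈ Set.Icc (0:ℝ) (NN P z),
      ∑ x, (min u (aa P z x + P (x, z, false)) - min u (aa P z x)) = u := by
    intro u hu
    rw [sum_delta hP0 z u, min_eq_left hu.2, min_eq_right hu.1, sub_zero]
  have key_ineq : ∀ x : X,
      cc P z xs * ((min t (aa P z x + P (x, z, false)) - min t (aa P z x))
        - (min t0 (aa P z x + P (x, z, false)) - min t0 (aa P z x)))
      ≤ gterm P z x t - gterm P z x t0 := by
    intro x
    by_cases hwx : 0 < P (x, z, false)
    · rw [gterm, gterm]
      simp only [hwx, if_true]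
      have hgoal : gterm P z x t - gterm P z x t0 = cc P z x *
          ((min t (aa P z x + P (x, z, false)) - min t (aa P z x))
          - (min t0 (aa P z x + P (x, z, false)) - min t0 (aa P z x))) := by
        rw [gterm, gterm]; simp only [hwx, if_true]; ring
      rcases lt_trichotomy (key P z x) (key P z xs) with hk | hk | hk
      · -- Δ at t0 saturated at w x, so the increment is ≤ 0; cc x ≤ cc xs
        have hbx : aa P z x + P (x, z, false) ≤ aa P z xs := aa_add_le hP0 z hk
        have hsat : min t0 (aa P z x + P (x, z, false)) - min t0 (aa P z x)
            = P (x, z, false) := by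
          rw [min_eq_right (by linarith), min_eq_right (by linarith)]
          ring
        have hle : min t (aa P z x + P (x, z, false)) - min t (aa P z x)
            ≤ P (x, z, false) := by
          rcases le_total t (aa P z x) with h | h
          · rw [min_eq_left (by linarith), min_eq_left h]; linarith
          · rw [min_eq_right h]
            have : min t (aa P z x + P (x, z, false)) ≤ aa P z x + P (x, z, false) :=
              min_le_right _ _
            linarith
        have hccle : cc P z x ≤ cc P z xs :=
          cc_mono hP0 hwx hw (score_le_of_key_le P z hk.le)
        have hDneg : (min t (aa P z x + P (x, z, false)) - min t (aa P z x))
            - (min t0 (aa P z x + P (x, z, false)) - min t0 (aa P z x)) ≤ 0 := by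
          rw [hsat]; linarith
        nlinarith [hDneg, hccle]
      · -- same cell
        have : x = xs := key_inj P z hk
        subst this
        linarith [le_refl (0:ℝ)]
      · -- Δ at t0 is 0; increment ≥ 0; cc x ≥ cc xs
        have hbx : aa P z xs + P (xs, z, false) ≤ aa P z x := aa_add_le hP0 z hk
        have hzero : min t0 (aa P z x + P (x, z, false)) - min t0 (aa P z x) = 0 := by
          rw [min_eq_left (by linarith), min_eq_left (by linarith)]
          ring
        have hge : 0 ≤ min t (aa P z x + P (x, z, false)) - min t (aa P z x) := by
          have : min t (aa P z x) ≤ min t (aa P z x + P (x, z, false)) :=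
            min_le_min le_rfl (by linarith)
          linarith
        have hccge : cc P z xs ≤ cc P z x :=
          cc_mono hP0 hw hwx (score_le_of_key_le P z hk.le)
        have hDpos : 0 ≤ (min t (aa P z x + P (x, z, false)) - min t (aa P z x))
            - (min t0 (aa P z x + P (x, z, false)) - min t0 (aa P z x)) := by
          rw [hzero]; linarith
        nlinarith [hDpos, hccge]
    · have hw0 : P (x, z, false) = 0 := le_antisymm (not_lt.mp hwx) (hP0 _)
      have e1 : gterm P z x t = 0 := by rw [gterm]; simp [hwx]
      have e2 : gterm P z x t0 = 0 := by rw [gterm]; simp [hwx]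
      rw [e1, e2, hw0]
      simp
  have hsumineq := Finset.sum_le_sum (fun x (_ : x ∈ (univ : Finset X)) => key_ineq x)
  rw [← Finset.mul_sum] at hsumineq
  have hsd : ∑ x, ((min t (aa P z x + P (x, z, false)) - min t (aa P z x))
      - (min t0 (aa P z x + P (x, z, false)) - min t0 (aa P z x))) = t - t0 := by
    rw [Finset.sum_sub_distrib, hsum t ht, hsum t0 ht0]
  rw [hsd, Finset.sum_sub_distrib] at hsumineq
  linarith

end Aux4

section Aux5
variable {X : Type*} [Fintype X]

lemma convexOn_of_support {D : Set ℝ} (hD : Convex ℝ D) {f : ℝ → ℝ}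
    (h : ∀ s ∈ D, ∃ m, ∀ r ∈ D, f s + m * (r - s) ≤ f r) : ConvexOn ℝ D f := by
  refine ⟨hD, fun u hu v hv a b ha hb hab => ?_⟩
  have hs : a • u + b • v ∈ D := hD hu hv ha hb hab
  obtain ⟨m, hm⟩ := h _ hs
  have h1 := hm u hu
  have h2 := hm v hv
  simp only [smul_eq_mul] at *
  have key := add_le_add (mul_le_mul_of_nonneg_left h1 ha) (mul_le_mul_of_nonneg_left h2 hb)
  have e : a * (f (a*u+b*v) + m * (u - (a*u+b*v))) + b * (f (a*u+b*v) + m * (v - (a*u+b*v)))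
      = f (a*u+b*v) := by
    linear_combination (f (a*u+b*v) - m*(a*u+b*v)) * hab
  linarith [key, e]

lemma cont_Lam (P : X × Bool × Bool → ℝ) : Continuous (Lam P) := by
  apply continuous_finset_sum
  intro z _
  apply continuous_finset_sum
  intro x _
  have hc : Continuous fun t => gterm P z x t := by
    by_cases h : 0 < P (x, z, false)
    · simp only [gterm, h, if_true]
      exact continuous_const.add (continuous_const.mul
        ((continuous_id.min continuous_const).sub (continuous_id.min continuous_const)))
    · simp only [gterm, h, if_false]
      exact continuous_const
  exact hc.comp (continuous_id.mul continuous_const)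

def IsAffOn (s : Set ℝ) (f : ℝ → ℝ) : Prop := ∃ c d : ℝ, ∀ r ∈ s, f r = c * r + d

lemma isAffOn_const (s : Set ℝ) (d : ℝ) : IsAffOn s (fun _ => d) :=
  ⟨0, d, fun r _ => by ring⟩

lemma isAffOn_add {s : Set ℝ} {f g : ℝ → ℝ} (hf : IsAffOn s f) (hg : IsAffOn s g) :
    IsAffOn s (fun r => f r + g r) := by
  obtain ⟨c, d, hf⟩ := hf
  obtain ⟨c', d', hg⟩ := hg
  exact ⟨c + c', d + d', fun r hr => by show f r + g r = _; rw [hf r hr, hg r hr]; ring⟩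

lemma isAffOn_sub {s : Set ℝ} {f g : ℝ → ℝ} (hf : IsAffOn s f) (hg : IsAffOn s g) :
    IsAffOn s (fun r => f r - g r) := by
  obtain ⟨c, d, hf⟩ := hf
  obtain ⟨c', d', hg⟩ := hg
  exact ⟨c - c', d - d', fun r hr => by show f r - g r = _; rw [hf r hr, hg r hr]; ring⟩

lemma isAffOn_const_mul {s : Set ℝ} {f : ℝ → ℝ} (a : ℝ) (hf : IsAffOn s f) :
    IsAffOn s (fun r => a * f r) := by
  obtain ⟨c, d, hf⟩ := hf
  exact ⟨a * c, a * d, fun r hr => by show a * f r = _; rw [hf r hr]; ring⟩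

lemma isAffOn_sum {ι : Type*} {s : Set ℝ} (t : Finset ι) (F : ι → ℝ → ℝ)
    (h : ∀ i ∈ t, IsAffOn s (F i)) : IsAffOn s (fun r => ∑ i ∈ t, F i r) := by
  classical
  induction t using Finset.induction_on with
  | empty => exact ⟨0, 0, by simp⟩
  | @insert j t hj ih =>
    obtain ⟨c, d, hcd⟩ := h _ (Finset.mem_insert_self j t)
    obtain ⟨c', d', hcd'⟩ := ih (fun i hi => h i (Finset.mem_insert_of_mem hi))
    refine ⟨c + c', d + d', fun r hr => ?_⟩
    show ∑ i ∈ insert j t, F i r = _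
    rw [Finset.sum_insert hj, hcd r hr]
    have := hcd' r hr
    simp only at this
    rw [this]
    ring

end Aux5

/-- The map `r ↦ L(f_r)` (loss of the group-wise mass-threshold classifier of false
positive rate `r` on both groups) is continuous, convex and piecewise linear on `[0,1]`. -/
theorem stmt13 {X : Type*} [Fintype X] (P : X × Bool × Bool → ℝ) (hP : IsDist P)
    (h0 : ∀ z, 0 < ∑ x, P (x, z, false)) (hm : MergedScores P) (L : ℝ → ℝ)
    (hL : ∀ r ∈ Set.Icc (0 : ℝ) 1, ∀ f : X × Bool → ℝ,
      InUnit f → IsPrefix P f →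
      (∀ x z, 0 < cellMass P x z → score P x z = 1 → f (x, z) = 1) →
      (∀ z, fpr P f z = r) → loss P f = L r) :
    ContinuousOn L (Set.Icc 0 1) ∧ ConvexOn ℝ (Set.Icc 0 1) L ∧
      ∃ (n : ℕ) (t : Fin (n + 1) → ℝ), StrictMono t ∧ t 0 = 0 ∧ t (Fin.last n) = 1 ∧
        ∀ i : Fin n, ∃ c d : ℝ,
          ∀ r ∈ Set.Icc (t i.castSucc) (t i.succ), L r = c * r + d := by
  have hP0 : ∀ p, 0 ≤ P p := hP.1
  have hN : ∀ z, (0:ℝ) < NN P z := h0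
  have hLam : ∀ r ∈ Set.Icc (0:ℝ) 1, L r = Lam P r := by
    intro r hr
    exact (hL r hr (ff P r) (inUnit_ff r) (isPrefix_ff hP0) (ff_score_one hP0)
      (fun z => fpr_ff hP0 h0 hr z)).symm.trans (loss_ff hP0 r)
  refine ⟨?_, ?_, ?_⟩
  · exact ((cont_Lam P).continuousOn).congr hLam
  · apply convexOn_of_support (convex_Icc 0 1)
    intro s hs
    have hmem : ∀ z : Bool, s * NN P z ∈ Set.Icc (0:ℝ) (NN P z) := by
      intro z
      constructor
      · exact mul_nonneg hs.1 (hN z).le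
      · nlinarith [hs.1, hs.2, hN z]
    have hch : ∀ z : Bool, ∃ m, ∀ t ∈ Set.Icc (0:ℝ) (NN P z),
        (∑ x, gterm P z x (s * NN P z)) + m * (t - s * NN P z) ≤ ∑ x, gterm P z x t :=
      fun z => group_support hP0 z (hN z) (hmem z)
    choose m hmz using hch
    refine ⟨∑ z, m z * NN P z, fun r hr => ?_⟩
    rw [hLam s hs, hLam r hr, Lam, Lam]
    have hterm : ∀ z : Bool,
        (∑ x, gterm P z x (s * NN P z)) + m z * (r * NN P z - s * NN P z)
          ≤ ∑ x, gterm P z x (r * NN P z) := by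
      intro z
      apply hmz z
      constructor
      · exact mul_nonneg hr.1 (hN z).le
      · nlinarith [hr.1, hr.2, hN z]
    have hsum := Finset.sum_le_sum (fun z (_ : z ∈ (univ : Finset Bool)) => hterm z)
    rw [Finset.sum_add_distrib] at hsum
    have heq : ∑ z : Bool, m z * (r * NN P z - s * NN P z)
        = (∑ z : Bool, m z * NN P z) * (r - s) := by
      rw [Finset.sum_mul]
      exact Finset.sum_congr rfl fun z _ => by ring
    rw [heq] at hsum
    linarith
  · -- piecewise linearity
    set B : Finset ℝ := insert 0 (insert 1
      ((((univ : Finset (Bool × X))).image fun p => aa P p.1 p.2 / NN P p.1) ∪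
       (((univ : Finset (Bool × X))).image fun p => (aa P p.1 p.2 + P (p.2, p.1, false)) / NN P p.1)))
      with hB
    have hB0 : (0:ℝ) ∈ B := Finset.mem_insert_self _ _
    have hB1 : (1:ℝ) ∈ B := Finset.mem_insert_of_mem (Finset.mem_insert_self _ _)
    have hBmem : ∀ u ∈ B, 0 ≤ u ∧ u ≤ 1 := by
      intro u hu
      rw [hB] at hu
      simp only [Finset.mem_insert, Finset.mem_union, Finset.mem_image, Finset.mem_univ,
        true_and] at hu
      rcases hu with rfl | rfl | ⟨p, hp⟩ | ⟨p, hp⟩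
      · exact ⟨le_rfl, zero_le_one⟩
      · exact ⟨zero_le_one, le_rfl⟩
      · subst hp
        constructor
        · exact div_nonneg (aa_nonneg hP0 _ _) (hN p.1).le
        · rw [div_le_one (hN p.1)]
          have := bb_le_NN hP0 p.1 p.2
          have := hP0 (p.2, p.1, false)
          linarith
      · subst hp
        constructor
        · exact div_nonneg (by
            have := aa_nonneg hP0 p.1 p.2
            have := hP0 (p.2, p.1, false)
            linarith) (hN p.1).le
        · rw [div_le_one (hN p.1)]
          exact bb_le_NN hP0 p.1 p.2
    have hcard : B.card = (B.card - 1) + 1 :=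
      (Nat.succ_pred_eq_of_pos (Finset.card_pos.mpr ⟨0, hB0⟩)).symm
    set n := B.card - 1 with hn
    set iso := B.orderIsoOfFin hcard with hiso
    set t : Fin (n + 1) → ℝ := fun i => (iso i : ℝ) with ht
    have htmono : StrictMono t := fun i j hij => Subtype.coe_lt_coe.mpr (iso.strictMono hij)
    have htmem : ∀ i, t i ∈ B := fun i => (iso i).2
    have hsurj : ∀ u ∈ B, ∃ k, t k = u := by
      intro u hu
      exact ⟨iso.symm ⟨u, hu⟩, by rw [ht]; simp⟩
    have ht0 : t 0 = 0 := by
      obtain ⟨k, hk⟩ := hsurj 0 hB0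
      have h1 : t 0 ≤ t k := htmono.monotone (Fin.zero_le k)
      have h2 : 0 ≤ t 0 := (hBmem _ (htmem 0)).1
      rw [hk] at h1
      linarith
    have htlast : t (Fin.last n) = 1 := by
      obtain ⟨k, hk⟩ := hsurj 1 hB1
      have h1 : t k ≤ t (Fin.last n) := htmono.monotone (Fin.le_last k)
      have h2 : t (Fin.last n) ≤ 1 := (hBmem _ (htmem _)).2
      rw [hk] at h1
      linarith
    refine ⟨n, t, htmono, ht0, htlast, ?_⟩
    intro i
    have hgap : ∀ u ∈ B, u ≤ t i.castSucc ∨ t i.succ ≤ u := by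
      intro u hu
      obtain ⟨k, hk⟩ := hsurj u hu
      rcases le_or_gt k i.castSucc with h | h
      · exact Or.inl (hk ▸ htmono.monotone h)
      · exact Or.inr (hk ▸ htmono.monotone (Fin.castSucc_lt_iff_succ_le.mp h))
    set I : Set ℝ := Set.Icc (t i.castSucc) (t i.succ) with hI
    have hIsub : I ⊆ Set.Icc (0:ℝ) 1 := by
      intro r hr
      constructor
      · have : t 0 ≤ t i.castSucc := htmono.monotone (Fin.zero_le _)
        rw [ht0] at this
        exact le_trans this hr.1
      · have : t i.succ ≤ t (Fin.last n) := htmono.monotone (Fin.le_last _)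
        rw [htlast] at this
        exact le_trans hr.2 this
    have hminAff : ∀ (z : Bool) (v : ℝ), v / NN P z ∈ B →
        IsAffOn I (fun r => min (r * NN P z) v) := by
      intro z v hv
      rcases hgap _ hv with h | h
      · refine ⟨0, v, fun r hr => ?_⟩
        have hvr : v ≤ r * NN P z := (div_le_iff₀ (hN z)).mp (le_trans h hr.1)
        show min (r * NN P z) v = _
        rw [min_eq_right hvr]; ring
      · refine ⟨NN P z, 0, fun r hr => ?_⟩
        have hrv : r * NN P z ≤ v := (le_div_iff₀ (hN z)).mp (le_trans hr.2 h)
        show min (r * NN P z) v = _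
        rw [min_eq_left hrv]; ring
    have hLamAff : IsAffOn I (Lam P) := by
      apply isAffOn_sum
      intro z _
      apply isAffOn_sum
      intro x _
      by_cases hwx : 0 < P (x, z, false)
      · have hgt : (fun r => gterm P z x (r * NN P z)) = fun r =>
            P (x, z, true) + cc P z x * (min (r * NN P z) (aa P z x + P (x, z, false))
              - min (r * NN P z) (aa P z x)) := by
          funext r
          rw [gterm]
          simp only [hwx, if_true]
        rw [hgt]
        apply isAffOn_add (isAffOn_const _ _)
        apply isAffOn_const_mul
        apply isAffOn_sub
        · apply hminAff z
          rw [hB]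
          apply Finset.mem_insert_of_mem
          apply Finset.mem_insert_of_mem
          apply Finset.mem_union_right
          exact Finset.mem_image.mpr ⟨(z, x), Finset.mem_univ _, rfl⟩
        · apply hminAff z
          rw [hB]
          apply Finset.mem_insert_of_mem
          apply Finset.mem_insert_of_mem
          apply Finset.mem_union_left
          exact Finset.mem_image.mpr ⟨(z, x), Finset.mem_univ _, rfl⟩
      · have hgt : (fun r => gterm P z x (r * NN P z)) = fun _ => (0:ℝ) := by
          funext r
          rw [gterm]
          simp only [hwx, if_false]
        rw [hgt]
        exact isAffOn_const _ _
    obtain ⟨c, d, hcd⟩ := hLamAff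
    refine ⟨c, d, fun r hr => ?_⟩
    rw [hLam r (hIsub hr)]
    exact hcd r hr
end

section
/- There exists r' ∈ [0,1] such that the group-wise mass-threshold classifier f_{r'} minimizes the 0-1 loss among all randomized classifiers satisfying Predictive Equality (equal false positive rates across the two groups). -/
open Finset

/-! The predictive-equality classifiers form a compact set on which the loss is continuous, so a
loss minimizer `f` exists, and its common false positive rate is `r'`. Such a minimizer is a
threshold classifier: if a cell of higher score were not fully accepted while a cell of lower score
in the same group is partly accepted, shifting acceptance from the lower cell to the higher one in
proportions that keep the false positive rate fixed would strictly decrease the loss. -/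

open Filter Topology

lemma exists_pos_mul_lt_and_mul_lt {c₁ c₂ d₁ d₂ : ℝ} (hd₁ : 0 < d₁) (hd₂ : 0 < d₂) :
    ∃ s > 0, s * c₁ < d₁ ∧ s * c₂ < d₂ := by
  have small : ∀ c d : ℝ, 0 < d → ∀ᶠ s in 𝓝[>] (0 : ℝ), s * c < d := fun c d hd =>
    nhdsWithin_le_nhds <|
      ((continuous_id.mul continuous_const).tendsto' 0 0 (zero_mul c)).eventually (gt_mem_nhds hd)
  obtain ⟨s, ⟨h₁, h₂⟩, hs⟩ :=
    (((small c₁ d₁ hd₁).and (small c₂ d₂ hd₂)).and self_mem_nhdsWithin).exists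
  exact ⟨s, hs, h₁, h₂⟩

section Score

variable {X : Type*} {P : X × Bool × Bool → ℝ} {x x' : X} {z : Bool}

lemma score_eq_one_iff (hx : 0 < cellMass P x z) : score P x z = 1 ↔ P (x, z, false) = 0 := by
  rw [score, div_eq_one_iff_eq hx.ne', cellMass]
  constructor <;> intro h <;> linarith

lemma score_lt_score_iff (hx : 0 < cellMass P x z) (hx' : 0 < cellMass P x' z) :
    score P x' z < score P x z ↔
      P (x', z, true) * P (x, z, false) < P (x, z, true) * P (x', z, false) := by
  rw [score, score, div_lt_div_iff₀ hx' hx, cellMass, cellMass]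
  constructor <;> intro h <;> linarith

end Score

section Feasible

variable {X : Type*} [Fintype X] (P : X × Bool × Bool → ℝ)

def peClassifiers : Set (X × Bool → ℝ) :=
  {g | InUnit g ∧ fpr P g true = fpr P g false}

lemma loss_eq_sum (g : X × Bool → ℝ) :
    loss P g = ∑ r : X × Bool,
      (P (r.1, r.2, true) + g r * (P (r.1, r.2, false) - P (r.1, r.2, true))) := by
  rw [loss, Fintype.sum_prod_type]
  exact Finset.sum_congr rfl fun x _ => Finset.sum_congr rfl fun z _ => by ring

lemma continuous_loss : Continuous (loss P) := by
  unfold loss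
  fun_prop

lemma continuous_fpr (z : Bool) : Continuous fun g : X × Bool → ℝ => fpr P g z := by
  unfold fpr
  fun_prop

lemma isCompact_peClassifiers : IsCompact (peClassifiers P) := by
  have hbox : IsCompact (Set.univ.pi fun _ : X × Bool => Set.Icc (0 : ℝ) 1) :=
    isCompact_univ_pi fun _ => isCompact_Icc
  convert hbox.inter_right (isClosed_eq (continuous_fpr P true) (continuous_fpr P false)) using 1
  ext g
  simp only [peClassifiers, InUnit, Set.mem_inter_iff, Set.mem_pi, Set.mem_univ, forall_const,
    Set.mem_ofPred_eq]

lemma zero_mem_peClassifiers : (0 : X × Bool → ℝ) ∈ peClassifiers P :=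
  ⟨fun _ => by simp, by simp [fpr]⟩

lemma exists_isMinOn_loss : ∃ f ∈ peClassifiers P, IsMinOn (loss P) (peClassifiers P) f :=
  (isCompact_peClassifiers P).exists_isMinOn ⟨0, zero_mem_peClassifiers P⟩
    (continuous_loss P).continuousOn

variable {P}

lemma fpr_mem_Icc (hP : ∀ p, 0 ≤ P p) {g : X × Bool → ℝ} (hg : InUnit g) (z : Bool) :
    fpr P g z ∈ Set.Icc (0 : ℝ) 1 := by
  have hterm : ∀ x,
      0 ≤ g (x, z) * P (x, z, false) ∧ g (x, z) * P (x, z, false) ≤ P (x, z, false) :=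
    fun x => ⟨mul_nonneg (hg _).1 (hP _), mul_le_of_le_one_left (hP _) (hg _).2⟩
  have hden : 0 ≤ ∑ x, P (x, z, false) := Finset.sum_nonneg fun x _ => hP _
  exact ⟨div_nonneg (Finset.sum_nonneg fun x _ => (hterm x).1) hden,
    div_le_one_of_le₀ (Finset.sum_le_sum fun x _ => (hterm x).2) hden⟩

end Feasible

section Transfer

variable {X : Type*} [DecidableEq X]

def transfer (f : X × Bool → ℝ) (z : Bool) (x x' : X) (a b : ℝ) : X × Bool → ℝ :=
  f + Pi.single (x, z) a - Pi.single (x', z) b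

variable {f : X × Bool → ℝ} {z : Bool} {x x' : X} {a b : ℝ}

lemma transfer_apply (r : X × Bool) :
    transfer f z x x' a b r =
      f r + (Pi.single (x, z) a : X × Bool → ℝ) r - (Pi.single (x', z) b : X × Bool → ℝ) r :=
  rfl

lemma transfer_apply_of_ne {z' : Bool} (hz : z' ≠ z) (y : X) :
    transfer f z x x' a b (y, z') = f (y, z') := by
  simp [transfer_apply, hz]

lemma InUnit.transfer (hf : InUnit f) (ha : 0 ≤ a) (ha' : a ≤ 1 - f (x, z)) (hb : 0 ≤ b)
    (hb' : b ≤ f (x', z)) : InUnit (transfer f z x x' a b) := by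
  intro r
  have hf := hf r
  rw [transfer_apply, Pi.single_apply, Pi.single_apply]
  constructor <;> split_ifs <;> subst_vars <;> simp_all <;> linarith

variable [Fintype X] {P : X × Bool × Bool → ℝ}

lemma sum_transfer_mul (w : X → ℝ) :
    ∑ y, transfer f z x x' a b (y, z) * w y = ∑ y, f (y, z) * w y + a * w x - b * w x' := by
  simp [transfer_apply, add_mul, sub_mul, Finset.sum_add_distrib, Finset.sum_sub_distrib,
    Pi.single_apply, ite_mul]

lemma fpr_transfer (h : a * P (x, z, false) = b * P (x', z, false)) (z' : Bool) :
    fpr P (transfer f z x x' a b) z' = fpr P f z' := by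
  unfold fpr
  congr 1
  rcases eq_or_ne z' z with rfl | hz
  · rw [sum_transfer_mul, h, add_sub_cancel_right]
  · simp only [transfer_apply_of_ne hz]

lemma loss_transfer :
    loss P (transfer f z x x' a b) = loss P f + a * (P (x, z, false) - P (x, z, true))
      - b * (P (x', z, false) - P (x', z, true)) := by
  simp only [loss_eq_sum, transfer_apply, add_mul, sub_mul, Finset.sum_add_distrib,
    Finset.sum_sub_distrib, Pi.single_apply, ite_mul, zero_mul, Finset.sum_ite_eq',
    Finset.mem_univ, if_true]
  ring

lemma IsMinOn.le_loss_transfer (hmin : IsMinOn (loss P) (peClassifiers P) f)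
    (hf : f ∈ peClassifiers P) (hab : a * P (x, z, false) = b * P (x', z, false))
    (ha : 0 ≤ a) (ha' : a ≤ 1 - f (x, z)) (hb : 0 ≤ b) (hb' : b ≤ f (x', z)) :
    loss P f ≤ loss P (transfer f z x x' a b) :=
  isMinOn_iff.1 hmin _
    ⟨hf.1.transfer ha ha' hb hb', by rw [fpr_transfer hab, fpr_transfer hab]; exact hf.2⟩

lemma IsMinOn.apply_eq_one_of_score_eq_one (hmin : IsMinOn (loss P) (peClassifiers P) f)
    (hf : f ∈ peClassifiers P) (hx : 0 < cellMass P x z) (hs : score P x z = 1) :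
    f (x, z) = 1 := by
  have h₀ : P (x, z, false) = 0 := (score_eq_one_iff hx).1 hs
  have h₁ : 0 < P (x, z, true) := by rwa [cellMass, h₀, zero_add] at hx
  have hle := hmin.le_loss_transfer (x' := x) (b := 0) hf (by rw [h₀, mul_zero, zero_mul])
    (sub_nonneg.2 (hf.1 _).2) le_rfl le_rfl (hf.1 _).1
  rw [loss_transfer, h₀] at hle
  nlinarith [(hf.1 (x, z)).2]

lemma IsMinOn.isPrefix (hP : ∀ p, 0 ≤ P p) (hmin : IsMinOn (loss P) (peClassifiers P) f)
    (hf : f ∈ peClassifiers P) : IsPrefix P f := by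
  intro z x x' hx hx' hlt hfx'
  by_contra hne
  have hfx : 0 < 1 - f (x, z) := sub_pos.2 ((hf.1 _).2.lt_of_ne hne)
  obtain ⟨s, hs, hsa, hsb⟩ := exists_pos_mul_lt_and_mul_lt (c₁ := P (x', z, false))
    (c₂ := P (x, z, false)) hfx hfx'
  -- the loss changes by `s * (P₁(x') P₀(x) - P₁(x) P₀(x'))`, writing `Pᵢ(y)` for `P (y, z, i)`
  have hle := hmin.le_loss_transfer hf (a := s * P (x', z, false)) (b := s * P (x, z, false))
    (by ring) (mul_nonneg hs.le (hP _)) hsa.le (mul_nonneg hs.le (hP _)) hsb.le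
  rw [loss_transfer] at hle
  nlinarith [mul_pos hs (sub_pos.2 ((score_lt_score_iff hx hx').1 hlt))]

end Transfer

theorem stmt15_general {X : Type*} [Fintype X] (P : X × Bool × Bool → ℝ) (hP : IsDist P) :
    ∃ r' ∈ Set.Icc (0 : ℝ) 1, ∃ f : X × Bool → ℝ,
      InUnit f ∧ IsPrefix P f ∧
      (∀ x z, 0 < cellMass P x z → score P x z = 1 → f (x, z) = 1) ∧
      (∀ z, fpr P f z = r') ∧
      ∀ g : X × Bool → ℝ, InUnit g → fpr P g true = fpr P g false →
        loss P f ≤ loss P g := by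
  classical
  obtain ⟨f, hf, hmin⟩ := exists_isMinOn_loss P
  exact ⟨fpr P f true, fpr_mem_Icc hP.1 hf.1 true, f, hf.1, hmin.isPrefix hP.1 hf,
    fun x z => hmin.apply_eq_one_of_score_eq_one hf, Bool.forall_bool.2 ⟨hf.2.symm, rfl⟩,
    fun g hg hpe => isMinOn_iff.1 hmin g ⟨hg, hpe⟩⟩

/-- There is `r' ∈ [0,1]` such that the group-wise mass-threshold classifier of false
positive rate `r'` on both groups minimizes the 0-1 loss among all randomized classifiers
satisfying predictive equality. -/
theorem stmt15 {X : Type*} [Fintype X] (P : X × Bool × Bool → ℝ) (hP : IsDist P)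
    (h0 : ∀ z, 0 < ∑ x, P (x, z, false)) :
    ∃ r' ∈ Set.Icc (0 : ℝ) 1, ∃ f : X × Bool → ℝ,
      InUnit f ∧ IsPrefix P f ∧
      (∀ x z, 0 < cellMass P x z → score P x z = 1 → f (x, z) = 1) ∧
      (∀ z, fpr P f z = r') ∧
      ∀ g : X × Bool → ℝ, InUnit g → fpr P g true = fpr P g false →
        loss P f ≤ loss P g :=
  stmt15_general P hP
end
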